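/- arXiv:2112.10191 — 8 statements merged into one kernel-verified Lean document; each statement's English description precedes it below -/
import Mathlib

section
/- Let Ω ⊂ ℝ² be open, bounded and simply connected with smooth boundary, λ ∈ (0,1), and suppose Ω is λ-simple. For y ∈ ∂Ω let γ⁺(y) be the unique second intersection point of the line {x : ℓ⁺(x) = ℓ⁺(y)} with ∂Ω (with γ⁺(y) = y at critical points of ℓ⁺), and similarly γ⁻. If γ^±(y) ≠ y, then sgn ℓ^∓(γ^±(y) − y) = ± sgn ∂_θ ℓ^±(y), where ∂_θ denotes the derivative along a positively oriented parametrization of ∂Ω. -/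
open Set

/-- `ℓ⁺(x) = x₁/λ + x₂/√(1-λ²)`. -/
noncomputable def ellP (lam : ℝ) (x : ℝ × ℝ) : ℝ := x.1 / lam + x.2 / Real.sqrt (1 - lam ^ 2)

/-- `ℓ⁻(x) = -x₁/λ + x₂/√(1-λ²)`. -/
noncomputable def ellM (lam : ℝ) (x : ℝ × ℝ) : ℝ := -x.1 / lam + x.2 / Real.sqrt (1 - lam ^ 2)

/-- A function on the boundary (in a periodic parametrization) has exactly two critical
points per period, both nondegenerate. -/
def TwoCrit (L : ℝ → ℝ) : Prop :=
  ∃ t₁ t₂ : ℝ, t₁ ∈ Ico (0 : ℝ) 1 ∧ t₂ ∈ Ico (0 : ℝ) 1 ∧ t₁ ≠ t₂ ∧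
    {t | t ∈ Ico (0 : ℝ) 1 ∧ deriv L t = 0} = {t₁, t₂} ∧
    deriv (deriv L) t₁ ≠ 0 ∧ deriv (deriv L) t₂ ≠ 0


lemma periodic_fract_eq {α : Type*} {L : ℝ → α} (h : Function.Periodic L 1) (x : ℝ) :
    L (Int.fract x) = L x := by
  have := h.sub_int_mul_eq (x := x) ⌊x⌋
  rw [mul_one] at this
  exact this

lemma deriv_periodic_fract_eq {L : ℝ → ℝ} (h : Function.Periodic L 1) (x : ℝ) :
    deriv L (Int.fract x) = deriv L x := by
  have hL : L = fun y => L (y - (⌊x⌋ : ℝ)) := by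
    funext y
    have := h.sub_int_mul_eq (x := y) ⌊x⌋
    simp only [mul_one] at this
    exact this.symm
  conv_rhs => rw [hL]
  rw [deriv_comp_sub_const]
  rfl

lemma fract_mem_Ico (x : ℝ) : Int.fract x ∈ Ico (0 : ℝ) 1 :=
  ⟨Int.fract_nonneg x, Int.fract_lt_one x⟩

/-- At a critical point of a `TwoCrit` periodic function, the level set is a single
point mod 1. -/
lemma fract_eq_of_crit {L : ℝ → ℝ} (hL : Differentiable ℝ L) (hper : Function.Periodic L 1)
    (h2 : TwoCrit L) {t u : ℝ} (ht : deriv L t = 0) (hu : L u = L t) :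
    Int.fract u = Int.fract t := by
  obtain ⟨t₁, t₂, ht₁, ht₂, hne, hset, _, _⟩ := h2
  have hcont : ContinuousOn L (Icc 0 1) := hL.continuous.continuousOn
  obtain ⟨τ, hτmem, hτmax⟩ := isCompact_Icc.exists_isMaxOn (nonempty_Icc.2 zero_le_one) hcont
  obtain ⟨σ, hσmem, hσmin⟩ := isCompact_Icc.exists_isMinOn (nonempty_Icc.2 zero_le_one) hcont
  set τ' := Int.fract τ with hτ'def
  set σ' := Int.fract σ with hσ'def
  have hτ'val : L τ' = L τ := periodic_fract_eq hper τ
  have hσ'val : L σ' = L σ := periodic_fract_eq hper σ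
  have hmax : ∀ x, L x ≤ L τ' := fun x => by
    rw [hτ'val, ← periodic_fract_eq hper x]
    exact hτmax (Ico_subset_Icc_self (fract_mem_Ico x))
  have hmin : ∀ x, L σ' ≤ L x := fun x => by
    rw [hσ'val, ← periodic_fract_eq hper x]
    exact hσmin (Ico_subset_Icc_self (fract_mem_Ico x))
  have hτ'crit : deriv L τ' = 0 :=
    IsLocalMax.deriv_eq_zero (Filter.Eventually.of_forall hmax)
  have hσ'crit : deriv L σ' = 0 :=
    IsLocalMin.deriv_eq_zero (Filter.Eventually.of_forall hmin)
  have memτ : τ' ∈ ({t₁, t₂} : Set ℝ) := by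
    rw [← hset]; exact ⟨fract_mem_Ico τ, hτ'crit⟩
  have memσ : σ' ∈ ({t₁, t₂} : Set ℝ) := by
    rw [← hset]; exact ⟨fract_mem_Ico σ, hσ'crit⟩
  have hMm : L τ' ≠ L σ' := by
    intro h
    have hconst : ∀ x, L x = L τ' := fun x => le_antisymm (hmax x) (h ▸ hmin x)
    have hsub : Ico (0:ℝ) 1 ⊆ ({t₁, t₂} : Set ℝ) := by
      intro x hx
      rw [← hset]
      refine ⟨hx, ?_⟩
      have hLc : L = fun _ => L τ' := funext hconst
      rw [hLc, deriv_const]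
    exact ((Set.Ico_infinite zero_lt_one).mono hsub)
      ((Set.finite_singleton t₂).insert t₁)
  have hτσ : τ' ≠ σ' := fun h => hMm (by rw [h])
  have memτ' : τ' = t₁ ∨ τ' = t₂ := by simpa using memτ
  have memσ' : σ' = t₁ ∨ σ' = t₂ := by simpa using memσ
  have hsets : ({t₁, t₂} : Set ℝ) = {τ', σ'} := by
    rcases memτ' with h1 | h1 <;> rcases memσ' with h2 | h2
    · exact absurd (h1.trans h2.symm) hτσ
    · rw [← h1, ← h2]
    · rw [← h1, ← h2]; exact Set.pair_comm _ _
    · exact absurd (h1.trans h2.symm) hτσ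
  have ht'crit : deriv L (Int.fract t) = 0 := (deriv_periodic_fract_eq hper t).trans ht
  have memt : Int.fract t ∈ ({τ', σ'} : Set ℝ) := by
    rw [← hsets, ← hset]; exact ⟨fract_mem_Ico t, ht'crit⟩
  have hu' : L (Int.fract u) = L (Int.fract t) := by
    rw [periodic_fract_eq hper u, periodic_fract_eq hper t]; exact hu
  rcases (by simpa using memt : Int.fract t = τ' ∨ Int.fract t = σ') with h | h
  · have hu'max : ∀ x, L x ≤ L (Int.fract u) := fun x => by
      rw [hu', h]; exact hmax x
    have hu'crit : deriv L (Int.fract u) = 0 :=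
      IsLocalMax.deriv_eq_zero (Filter.Eventually.of_forall hu'max)
    have memu : Int.fract u ∈ ({τ', σ'} : Set ℝ) := by
      rw [← hsets, ← hset]; exact ⟨fract_mem_Ico u, hu'crit⟩
    rcases (by simpa using memu : Int.fract u = τ' ∨ Int.fract u = σ') with h' | h'
    · rw [h', h]
    · exact absurd (by rw [← h, ← hu', h'] : L τ' = L σ') hMm
  · have hu'min : ∀ x, L (Int.fract u) ≤ L x := fun x => by
      rw [hu', h]; exact hmin x
    have hu'crit : deriv L (Int.fract u) = 0 :=
      IsLocalMin.deriv_eq_zero (Filter.Eventually.of_forall hu'min)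
    have memu : Int.fract u ∈ ({τ', σ'} : Set ℝ) := by
      rw [← hsets, ← hset]; exact ⟨fract_mem_Ico u, hu'crit⟩
    rcases (by simpa using memu : Int.fract u = τ' ∨ Int.fract u = σ') with h' | h'
    · exact absurd (by rw [← h', hu', h] : L τ' = L σ') hMm
    · rw [h', h]

/-- Open sub-segment lemma. -/
lemma openSegment_sub {y z p : ℝ × ℝ} (hp : p ∈ openSegment ℝ y z) :
    openSegment ℝ y p ⊆ openSegment ℝ y z := by
  obtain ⟨a, b, ha, hb, hab, rfl⟩ := hp
  rintro q ⟨a', b', ha', hb', hab', rfl⟩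
  refine ⟨a' + b' * a, b' * b, ?_, mul_pos hb' hb, by nlinarith, ?_⟩
  · positivity
  · simp only [smul_add, smul_smul, add_smul]
    abel


/-- Let `Ω ⊂ ℝ²` be open, bounded and simply connected with smooth boundary
(parametrized positively by a smooth periodic regular injective curve `X`), `λ ∈ (0,1)`,
and `Ω` λ-simple. If `γ⁺(y)` is a second intersection point of the line `{ℓ⁺ = ℓ⁺(y)}`
with `∂Ω` (the open chord lying in `Ω`), and `γ⁺(y) ≠ y`, then
`sgn ℓ⁻(γ⁺(y) − y) = sgn ∂_θ ℓ⁺(y)`; similarly for `γ⁻` with the opposite sign. -/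
theorem stmt1
    (Ω : Set (ℝ × ℝ)) (hΩo : IsOpen Ω) (hΩb : Bornology.IsBounded Ω)
    (hΩsc : SimplyConnectedSpace Ω)
    (lam : ℝ) (hlam : lam ∈ Ioo (0 : ℝ) 1)
    (X : ℝ → ℝ × ℝ) (hXs : ContDiff ℝ (⊤ : ℕ∞) X) (hXper : Function.Periodic X 1)
    (hXinj : InjOn X (Ico 0 1)) (hXrange : range X = frontier Ω)
    (hXreg : ∀ t, deriv X t ≠ 0)
    -- positive orientation: inward chords make a positively oriented frame with the velocity
    (horient : ∀ t : ℝ, ∀ p ∈ Ω, openSegment ℝ (X t) p ⊆ Ω →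
      0 ≤ (deriv X t).1 * (p - X t).2 - (deriv X t).2 * (p - X t).1)
    -- λ-simplicity
    (hsimpP : TwoCrit (fun t => ellP lam (X t))) (hsimpM : TwoCrit (fun t => ellM lam (X t)))
    -- the reflection maps γ±, at the parameter level
    (gp gm : ℝ → ℝ)
    (hgp : ∀ t : ℝ, ellP lam (X (gp t)) = ellP lam (X t) ∧
      (X (gp t) ≠ X t → openSegment ℝ (X t) (X (gp t)) ⊆ Ω))
    (hgm : ∀ t : ℝ, ellM lam (X (gm t)) = ellM lam (X t) ∧
      (X (gm t) ≠ X t → openSegment ℝ (X t) (X (gm t)) ⊆ Ω))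
    (t : ℝ) :
    (X (gp t) ≠ X t →
      Real.sign (ellM lam (X (gp t) - X t)) = Real.sign (deriv (fun s => ellP lam (X s)) t)) ∧
    (X (gm t) ≠ X t →
      Real.sign (ellP lam (X (gm t) - X t)) = - Real.sign (deriv (fun s => ellM lam (X s)) t)) := by
  obtain ⟨hlam0, hlam1⟩ := hlam
  set c := Real.sqrt (1 - lam ^ 2) with hcdef
  have hc : 0 < c := Real.sqrt_pos.2 (by nlinarith)
  have hXd : Differentiable ℝ X := hXs.differentiable (by simp)
  -- component derivatives
  have h1 : ∀ s, HasDerivAt (fun r => (X r).1) (deriv X s).1 s := fun s =>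
    (ContinuousLinearMap.fst ℝ ℝ ℝ).hasFDerivAt.comp_hasDerivAt s (hXd s).hasDerivAt
  have h2 : ∀ s, HasDerivAt (fun r => (X r).2) (deriv X s).2 s := fun s =>
    (ContinuousLinearMap.snd ℝ ℝ ℝ).hasFDerivAt.comp_hasDerivAt s (hXd s).hasDerivAt
  have hLP : ∀ s, HasDerivAt (fun r => ellP lam (X r))
      ((deriv X s).1 / lam + (deriv X s).2 / c) s := fun s => by
    simpa [ellP, hcdef] using ((h1 s).div_const lam).fun_add ((h2 s).div_const c)
  have hLM : ∀ s, HasDerivAt (fun r => ellM lam (X r))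
      (-(deriv X s).1 / lam + (deriv X s).2 / c) s := fun s => by
    simpa [ellM, hcdef, neg_div] using (((h1 s).div_const lam).fun_neg).fun_add ((h2 s).div_const c)
  have hLPd : Differentiable ℝ (fun r => ellP lam (X r)) := fun s => (hLP s).differentiableAt
  have hLMd : Differentiable ℝ (fun r => ellM lam (X r)) := fun s => (hLM s).differentiableAt
  have hLPper : Function.Periodic (fun r => ellP lam (X r)) 1 := fun s => by
    simp [hXper s]
  have hLMper : Function.Periodic (fun r => ellM lam (X r)) 1 := fun s => by
    simp [hXper s]
  set X' := deriv X t with hX'def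
  constructor
  · -- plus branch
    intro hne
    obtain ⟨hlev, hseg⟩ := hgp t
    have hsub := hseg hne
    set z := X (gp t) with hzdef
    set y := X t with hydef
    -- derivative value
    have hD : deriv (fun s => ellP lam (X s)) t = X'.1 / lam + X'.2 / c := (hLP t).deriv
    -- D ≠ 0
    have hDne : X'.1 / lam + X'.2 / c ≠ 0 := by
      intro h0
      apply hne
      have hfr := fract_eq_of_crit hLPd hLPper hsimpP (t := t) (u := gp t)
        (by rw [hD]; exact h0) hlev
      calc X (gp t) = X (Int.fract (gp t)) := (periodic_fract_eq hXper _).symm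
        _ = X (Int.fract t) := by rw [hfr]
        _ = X t := periodic_fract_eq hXper t
    -- level line equation
    have hline : (z.1 - y.1) / lam + (z.2 - y.2) / c = 0 := by
      have : z.1 / lam + z.2 / c = y.1 / lam + y.2 / c := by
        simpa [ellP, hcdef] using hlev
      rw [sub_div, sub_div]; linarith
    -- v1 ≠ 0
    have hv1 : z.1 - y.1 ≠ 0 := by
      intro h0
      apply hne
      have h0' : z.2 - y.2 = 0 := by
        field_simp [h0] at hline
        rw [h0, zero_mul, zero_add, mul_zero] at hline
        exact (mul_eq_zero.1 hline).resolve_left hlam0.ne'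
      have : z = y := by
        apply Prod.ext <;> [skip; skip] <;> linarith [h0, h0']
      exact this
    -- midpoint
    set p : ℝ × ℝ := ((y.1 + z.1) / 2, (y.2 + z.2) / 2) with hpdef
    have hpmem : p ∈ openSegment ℝ y z := by
      refine ⟨1/2, 1/2, by norm_num, by norm_num, by norm_num, ?_⟩
      apply Prod.ext <;> simp [hpdef, Prod.smul_fst, Prod.smul_snd, smul_eq_mul] <;> ring
    have hpΩ : p ∈ Ω := hsub hpmem
    have hcross := horient t p hpΩ ((openSegment_sub hpmem).trans hsub)
    have hcross' : 0 ≤ X'.1 * (z.2 - y.2) - X'.2 * (z.1 - y.1) := by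
      have hp1 : (p - y).1 = (z.1 - y.1) / 2 := by simp [hpdef]; ring
      have hp2 : (p - y).2 = (z.2 - y.2) / 2 := by simp [hpdef]; ring
      rw [hp1, hp2] at hcross
      linarith
    -- key identity
    have hkey : (1 / c) * (X'.1 * (z.2 - y.2) - X'.2 * (z.1 - y.1)) =
        -((z.1 - y.1) * (X'.1 / lam + X'.2 / c)) := by
      linear_combination X'.1 * hline
    have hle : (z.1 - y.1) * (X'.1 / lam + X'.2 / c) ≤ 0 := by
      nlinarith [mul_nonneg (le_of_lt (by positivity : (0:ℝ) < 1 / c)) hcross']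
    have hlt : (z.1 - y.1) * (X'.1 / lam + X'.2 / c) < 0 :=
      lt_of_le_of_ne hle (mul_ne_zero hv1 hDne)
    -- value of ellM on the chord
    have hval : ellM lam (z - y) = -(2 * (z.1 - y.1)) / lam := by
      simp only [ellM, ← hcdef, Prod.fst_sub, Prod.snd_sub]
      linear_combination hline
    rw [hD, hval]
    rcases lt_trichotomy (z.1 - y.1) 0 with hv | hv | hv
    · have hDpos : 0 < X'.1 / lam + X'.2 / c := by nlinarith
      rw [Real.sign_of_pos (div_pos (by linarith) hlam0 : (0:ℝ) < -(2 * (z.1 - y.1)) / lam),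
        Real.sign_of_pos hDpos]
    · exact absurd hv hv1
    · have hDneg : X'.1 / lam + X'.2 / c < 0 := by nlinarith
      rw [Real.sign_of_neg (div_neg_of_neg_of_pos (by linarith) hlam0 :
          -(2 * (z.1 - y.1)) / lam < 0), Real.sign_of_neg hDneg]
  · -- minus branch
    intro hne
    obtain ⟨hlev, hseg⟩ := hgm t
    have hsub := hseg hne
    set z := X (gm t) with hzdef
    set y := X t with hydef
    have hD : deriv (fun s => ellM lam (X s)) t = -X'.1 / lam + X'.2 / c := (hLM t).deriv
    have hDne : -X'.1 / lam + X'.2 / c ≠ 0 := by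
      intro h0
      apply hne
      have hfr := fract_eq_of_crit hLMd hLMper hsimpM (t := t) (u := gm t)
        (by rw [hD]; exact h0) hlev
      calc X (gm t) = X (Int.fract (gm t)) := (periodic_fract_eq hXper _).symm
        _ = X (Int.fract t) := by rw [hfr]
        _ = X t := periodic_fract_eq hXper t
    have hline : -(z.1 - y.1) / lam + (z.2 - y.2) / c = 0 := by
      have : -z.1 / lam + z.2 / c = -y.1 / lam + y.2 / c := by
        simpa [ellM, hcdef] using hlev
      linear_combination this
    have hv1 : z.1 - y.1 ≠ 0 := by
      intro h0
      apply hne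
      have h0' : z.2 - y.2 = 0 := by
        field_simp [h0] at hline
        rw [h0, zero_mul, neg_zero, zero_add, mul_zero] at hline
        exact (mul_eq_zero.1 hline).resolve_left hlam0.ne'
      have : z = y := by
        apply Prod.ext <;> [skip; skip] <;> linarith [h0, h0']
      exact this
    set p : ℝ × ℝ := ((y.1 + z.1) / 2, (y.2 + z.2) / 2) with hpdef
    have hpmem : p ∈ openSegment ℝ y z := by
      refine ⟨1/2, 1/2, by norm_num, by norm_num, by norm_num, ?_⟩
      apply Prod.ext <;> simp [hpdef, Prod.smul_fst, Prod.smul_snd, smul_eq_mul] <;> ring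
    have hpΩ : p ∈ Ω := hsub hpmem
    have hcross := horient t p hpΩ ((openSegment_sub hpmem).trans hsub)
    have hcross' : 0 ≤ X'.1 * (z.2 - y.2) - X'.2 * (z.1 - y.1) := by
      have hp1 : (p - y).1 = (z.1 - y.1) / 2 := by simp [hpdef]; ring
      have hp2 : (p - y).2 = (z.2 - y.2) / 2 := by simp [hpdef]; ring
      rw [hp1, hp2] at hcross
      linarith
    have hkey : (1 / c) * (X'.1 * (z.2 - y.2) - X'.2 * (z.1 - y.1)) =
        -((z.1 - y.1) * (-X'.1 / lam + X'.2 / c)) := by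
      linear_combination X'.1 * hline
    have hle : (z.1 - y.1) * (-X'.1 / lam + X'.2 / c) ≤ 0 := by
      nlinarith [mul_nonneg (le_of_lt (by positivity : (0:ℝ) < 1 / c)) hcross']
    have hlt : (z.1 - y.1) * (-X'.1 / lam + X'.2 / c) < 0 :=
      lt_of_le_of_ne hle (mul_ne_zero hv1 hDne)
    have hval : ellP lam (z - y) = (2 * (z.1 - y.1)) / lam := by
      simp only [ellP, ← hcdef, Prod.fst_sub, Prod.snd_sub]
      linear_combination hline
    rw [hD, hval]
    rcases lt_trichotomy (z.1 - y.1) 0 with hv | hv | hv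
    · have hDpos : 0 < -X'.1 / lam + X'.2 / c := by nlinarith
      rw [Real.sign_of_neg (div_neg_of_neg_of_pos (by linarith) hlam0 :
          (2 * (z.1 - y.1)) / lam < 0), Real.sign_of_pos hDpos]
    · exact absurd hv hv1
    · have hDneg : -X'.1 / lam + X'.2 / c < 0 := by nlinarith
      rw [Real.sign_of_pos (div_pos (by linarith) hlam0 : (0:ℝ) < (2 * (z.1 - y.1)) / lam),
        Real.sign_of_neg hDneg]
      norm_num
end

section
/- Let Ω be λ-simple. Then for every y ∈ ∂Ω and every x ∈ Ω, at least one of the following holds: ν⁺(y)·ℓ⁻(x−y) > 0 or ν⁻(y)·ℓ⁺(x−y) < 0, where ν^±(y) = sgn ∂_θ ℓ^±(y). -/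
open Set

lemma periodic_deriv (L : ℝ → ℝ) (h : Function.Periodic L 1) : Function.Periodic (deriv L) 1 := by
  intro x
  have hL : (fun y => L (y + 1)) = L := funext fun y => h y
  calc deriv L (x + 1) = deriv (fun y => L (y + 1)) x := (deriv_comp_add_const L 1 x).symm
  _ = deriv L x := by rw [hL]

lemma rep_exists (t x : ℝ) : ∃ k : ℤ, t < x + k ∧ x + k ≤ t + 1 := by
  refine ⟨⌊t - x⌋ + 1, ?_, ?_⟩ <;>
  · have h1 := Int.floor_le (t - x)
    have h2 := Int.lt_floor_add_one (t - x)
    push_cast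
    linarith

lemma rep_unique {t x : ℝ} {k k' : ℤ} (h1 : t < x + k) (h2 : x + k ≤ t + 1)
    (h3 : t < x + k') (h4 : x + k' ≤ t + 1) : k = k' := by
  have hA : ((k - k' : ℤ) : ℝ) < 1 := by push_cast; linarith
  have hB : (-1 : ℝ) < ((k - k' : ℤ) : ℝ) := by push_cast; linarith
  have hA' : (k - k' : ℤ) < 1 := by exact_mod_cast hA
  have hB' : (-1 : ℤ) < (k - k' : ℤ) := by exact_mod_cast hB
  omega



lemma periodic_shift {f : ℝ → ℝ} (h : Function.Periodic f 1) (x : ℝ) (k : ℤ) :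
    f (x + (k : ℝ)) = f x := by
  simpa using (h.int_mul k) x

lemma TwoCrit.neg {L : ℝ → ℝ} (h : TwoCrit L) : TwoCrit (fun t => -L t) := by
  obtain ⟨t₁, t₂, h1, h2, h12, hset, hn1, hn2⟩ := h
  have hd : deriv (fun t => -L t) = fun t => -deriv L t := funext fun x => deriv.neg
  refine ⟨t₁, t₂, h1, h2, h12, ?_, ?_, ?_⟩
  · rw [← hset]; ext x; simp [hd]
  · rw [hd]; simpa [deriv.neg] using hn1
  · rw [hd]; simpa [deriv.neg] using hn2

lemma twoCrit_structure (L : ℝ → ℝ) (hL : ContDiff ℝ (⊤ : ℕ∞) L) (hper : Function.Periodic L 1)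
    (hTC : TwoCrit L) (t : ℝ) (ht : 0 < deriv L t) :
    ∃ c₁ c₂ : ℝ, t < c₁ ∧ c₁ < c₂ ∧ c₂ < t + 1 ∧
      (∀ s, t ≤ s → s < c₁ → 0 < deriv L s) ∧
      (∀ s, c₁ < s → s < c₂ → deriv L s < 0) ∧
      (∀ s, c₂ < s → s ≤ t + 1 → 0 < deriv L s) ∧
      StrictMonoOn L (Icc t c₁) ∧ StrictAntiOn L (Icc c₁ c₂) ∧
      StrictMonoOn L (Icc c₂ (t + 1)) := by
  obtain ⟨t₁, t₂, ht₁, ht₂, ht₁₂, hset, hn₁, hn₂⟩ := hTC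
  have hdper : Function.Periodic (deriv L) 1 := periodic_deriv L hper
  have hd2per : Function.Periodic (deriv (deriv L)) 1 := periodic_deriv _ hdper
  have hcont : Continuous (deriv L) := hL.continuous_deriv (by simp)
  have hmem : ∀ x, x ∈ ({t₁, t₂} : Set ℝ) → deriv L x = 0 := by
    intro x hx; rw [← hset] at hx; exact hx.2
  obtain ⟨k₁, hk₁, hk₁'⟩ := rep_exists t t₁
  obtain ⟨k₂, hk₂, hk₂'⟩ := rep_exists t t₂
  set a := t₁ + (k₁ : ℝ) with ha_def
  set b := t₂ + (k₂ : ℝ) with hb_def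
  have hshift : ∀ x (k : ℤ), deriv L (x + k) = deriv L x := by
    intro x k; simpa using (hdper.int_mul k) x
  have hshift2 : ∀ x (k : ℤ), deriv (deriv L) (x + k) = deriv (deriv L) x := by
    intro x k; simpa using (hd2per.int_mul k) x
  have hda : deriv L a = 0 := by rw [ha_def, hshift]; exact hmem t₁ (mem_insert _ _)
  have hdb : deriv L b = 0 := by
    rw [hb_def, hshift]; exact hmem t₂ (mem_insert_of_mem _ rfl)
  have hd2a : deriv (deriv L) a ≠ 0 := by rw [ha_def, hshift2]; exact hn₁
  have hd2b : deriv (deriv L) b ≠ 0 := by rw [hb_def, hshift2]; exact hn₂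
  have hdt1 : deriv L (t + 1) = deriv L t := hdper t
  have halt : a < t + 1 := lt_of_le_of_ne hk₁' (by intro h; rw [h, hdt1] at hda; linarith)
  have hblt : b < t + 1 := lt_of_le_of_ne hk₂' (by intro h; rw [h, hdt1] at hdb; linarith)
  have hab : a ≠ b := by
    intro h
    have : t₁ - t₂ = ((k₂ - k₁ : ℤ) : ℝ) := by push_cast; rw [ha_def, hb_def] at h; linarith
    have h1 : (-1 : ℝ) < ((k₂ - k₁ : ℤ) : ℝ) := by
      rw [← this]; rcases ht₁ with ⟨h1', h2'⟩; rcases ht₂ with ⟨h3', h4'⟩; linarith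
    have h2 : ((k₂ - k₁ : ℤ) : ℝ) < 1 := by
      rw [← this]; rcases ht₁ with ⟨h1', h2'⟩; rcases ht₂ with ⟨h3', h4'⟩; linarith
    have : k₂ - k₁ = 0 := by
      have h1' : (-1 : ℤ) < k₂ - k₁ := by exact_mod_cast h1
      have h2' : (k₂ - k₁ : ℤ) < 1 := by exact_mod_cast h2
      omega
    apply ht₁₂
    have : ((k₂ - k₁ : ℤ) : ℝ) = 0 := by exact_mod_cast this
    linarith [this.symm ▸ ‹t₁ - t₂ = ((k₂ - k₁ : ℤ) : ℝ)›]
  -- zero characterization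
  have hzero : ∀ z, t < z → z < t + 1 → deriv L z = 0 → z = a ∨ z = b := by
    intro z h1 h2 h0
    have hx : Int.fract z ∈ Ico (0 : ℝ) 1 := ⟨Int.fract_nonneg z, Int.fract_lt_one z⟩
    have hdx : deriv L (Int.fract z) = 0 := by
      have he : z = Int.fract z + (⌊z⌋ : ℤ) := by rw [Int.fract]; ring
      rw [← h0]; conv_rhs => rw [he]
      rw [hshift]
    have hmemx : Int.fract z ∈ ({t₁, t₂} : Set ℝ) := by rw [← hset]; exact ⟨hx, hdx⟩
    have hez : z = Int.fract z + (⌊z⌋ : ℝ) := by rw [Int.fract]; ring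
    rcases hmemx with h | h
    · left
      rw [h] at hez
      have hk : ⌊z⌋ = k₁ := by
        apply rep_unique (x := t₁) (t := t)
        · rw [← hez]; exact h1
        · rw [← hez]; exact le_of_lt h2
        · exact hk₁
        · exact hk₁'
      rw [ha_def, ← hk]; exact hez
    · simp only [mem_singleton_iff] at h
      right
      rw [h] at hez
      have : ⌊z⌋ = k₂ := by
        apply rep_unique (x := t₂) (t := t)
        · rw [← hez]; exact h1
        · rw [← hez]; exact le_of_lt h2
        · exact hk₂
        · exact hk₂'
      rw [hb_def, ← this]; exact hez
  set c₁ := min a b with hc₁_def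
  set c₂ := max a b with hc₂_def
  have hc12 : c₁ < c₂ := min_lt_max.mpr hab
  have htc₁ : t < c₁ := lt_min hk₁ hk₂
  have hc₂t : c₂ < t + 1 := max_lt halt hblt
  have hc₁ab : c₁ = a ∨ c₁ = b := by
    rcases min_cases a b with h | h
    · exact Or.inl h.1
    · exact Or.inr h.1
  have hc₂ab : c₂ = a ∨ c₂ = b := by
    rcases max_cases a b with h | h
    · exact Or.inl h.1
    · exact Or.inr h.1
  have hdc₁ : deriv L c₁ = 0 := by rcases hc₁ab with h | h <;> rw [h] <;> assumption
  have hdc₂ : deriv L c₂ = 0 := by rcases hc₂ab with h | h <;> rw [h] <;> assumption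
  have hd2c₁ : deriv (deriv L) c₁ ≠ 0 := by rcases hc₁ab with h | h <;> rw [h] <;> assumption
  have hminle : c₁ ≤ a ∧ c₁ ≤ b := ⟨min_le_left _ _, min_le_right _ _⟩
  have hmaxle : a ≤ c₂ ∧ b ≤ c₂ := ⟨le_max_left _ _, le_max_right _ _⟩
  have ivt1 : ∀ u w : ℝ, u ≤ w → 0 < deriv L u → deriv L w ≤ 0 →
      ∃ z, u < z ∧ z ≤ w ∧ deriv L z = 0 := by
    intro u w huw hu hw
    rcases eq_or_lt_of_le hw with h | h
    · refine ⟨w, lt_of_le_of_ne huw ?_, le_refl _, h⟩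
      intro he; rw [he, h] at hu; exact lt_irrefl _ hu
    · have hsub := intermediate_value_Ioo' huw hcont.continuousOn
      have h0 : (0 : ℝ) ∈ Ioo (deriv L w) (deriv L u) := ⟨h, hu⟩
      obtain ⟨z, hz, hz0⟩ := hsub h0
      exact ⟨z, hz.1, le_of_lt hz.2, hz0⟩
  have ivt2 : ∀ u w : ℝ, u ≤ w → deriv L u ≤ 0 → 0 < deriv L w →
      ∃ z, u ≤ z ∧ z < w ∧ deriv L z = 0 := by
    intro u w huw hu hw
    rcases eq_or_lt_of_le hu with h | h
    · refine ⟨u, le_refl _, lt_of_le_of_ne huw ?_, h⟩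
      intro he; rw [← he, h] at hw; exact lt_irrefl _ hw
    · have hsub := intermediate_value_Ioo huw hcont.continuousOn
      have h0 : (0 : ℝ) ∈ Ioo (deriv L u) (deriv L w) := ⟨h, hw⟩
      obtain ⟨z, hz, hz0⟩ := hsub h0
      exact ⟨z, le_of_lt hz.1, hz.2, hz0⟩
  have claim1 : ∀ s, t ≤ s → s < c₁ → 0 < deriv L s := by
    intro s hs1 hs2
    by_contra hcon; push_neg at hcon
    obtain ⟨z, hz1, hz2, hz0⟩ := ivt1 t s hs1 ht hcon
    rcases hzero z hz1 (by linarith) hz0 with h | h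
    · have := hminle.1; linarith
    · have := hminle.2; linarith
  have ht1 : 0 < deriv L (t + 1) := by rw [hdt1]; exact ht
  have claim3 : ∀ s, c₂ < s → s ≤ t + 1 → 0 < deriv L s := by
    intro s hs1 hs2
    by_contra hcon; push_neg at hcon
    obtain ⟨z, hz1, hz2, hz0⟩ := ivt2 s (t + 1) hs2 hcon ht1
    rcases hzero z (by linarith) hz2 hz0 with h | h
    · have := hmaxle.1; linarith
    · have := hmaxle.2; linarith
  have haor : a = c₁ ∨ a = c₂ := by
    rcases le_total a b with h | h
    · exact Or.inl (min_eq_left h).symm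
    · exact Or.inr (max_eq_left h).symm
  have hbor : b = c₁ ∨ b = c₂ := by
    rcases le_total b a with h | h
    · exact Or.inl (min_eq_right h).symm
    · exact Or.inr (max_eq_right h).symm
  have nozero_mid : ∀ z, c₁ < z → z < c₂ → deriv L z ≠ 0 := by
    intro z h1 h2 h0
    rcases hzero z (by linarith) (by linarith) h0 with h | h
    · rcases haor with h' | h' <;> rw [h'] at h <;> linarith
    · rcases hbor with h' | h' <;> rw [h'] at h <;> linarith
  have exists_neg : ∃ s₀, c₁ < s₀ ∧ s₀ < c₂ ∧ deriv L s₀ < 0 := by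
    by_contra hall; push_neg at hall
    have hmin : IsLocalMin (deriv L) c₁ := by
      have hmemn : Ioo t c₂ ∈ nhds c₁ := Ioo_mem_nhds htc₁ hc12
      refine Filter.eventually_of_mem hmemn ?_
      intro x hx
      rw [hdc₁]
      rcases lt_trichotomy x c₁ with h | h | h
      · exact le_of_lt (claim1 x (le_of_lt hx.1) h)
      · rw [h, hdc₁]
      · exact hall x h hx.2
    exact hd2c₁ hmin.deriv_eq_zero
  have mid_neg : ∀ s, c₁ < s → s < c₂ → deriv L s < 0 := by
    intro s h1 h2
    rcases lt_trichotomy (deriv L s) 0 with h | h | h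
    · exact h
    · exact absurd h (nozero_mid s h1 h2)
    · obtain ⟨s₀, hs₀1, hs₀2, hs₀3⟩ := exists_neg
      rcases lt_trichotomy s s₀ with hss | hss | hss
      · obtain ⟨z, hz1, hz2, hz0⟩ := ivt1 s s₀ (le_of_lt hss) h (le_of_lt hs₀3)
        exact absurd hz0 (nozero_mid z (by linarith) (by linarith))
      · rw [hss] at h; linarith
      · obtain ⟨z, hz1, hz2, hz0⟩ := ivt2 s₀ s (le_of_lt hss) (le_of_lt hs₀3) h
        exact absurd hz0 (nozero_mid z (by linarith) (by linarith))
  have m1 : StrictMonoOn L (Icc t c₁) := by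
    apply strictMonoOn_of_deriv_pos (convex_Icc _ _) hL.continuous.continuousOn
    intro x hx
    rw [interior_Icc] at hx
    exact claim1 x (le_of_lt hx.1) hx.2
  have m2 : StrictAntiOn L (Icc c₁ c₂) := by
    apply strictAntiOn_of_deriv_neg (convex_Icc _ _) hL.continuous.continuousOn
    intro x hx
    rw [interior_Icc] at hx
    exact mid_neg x hx.1 hx.2
  have m3 : StrictMonoOn L (Icc c₂ (t + 1)) := by
    apply strictMonoOn_of_deriv_pos (convex_Icc _ _) hL.continuous.continuousOn
    intro x hx
    rw [interior_Icc] at hx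
    exact claim3 x hx.1 (le_of_lt hx.2)
  exact ⟨c₁, c₂, htc₁, hc12, hc₂t, claim1, mid_neg, claim3, m1, m2, m3⟩

open scoped ContDiff

lemma ivt_pos_neg (f : ℝ → ℝ) (hf : Continuous f) {u w : ℝ} (huw : u ≤ w) (hu : 0 < f u)
    (hw : f w ≤ 0) : ∃ z, u < z ∧ z ≤ w ∧ f z = 0 := by
  rcases eq_or_lt_of_le hw with h | h
  · refine ⟨w, lt_of_le_of_ne huw ?_, le_refl _, h⟩
    intro he; rw [he, h] at hu; exact lt_irrefl _ hu
  · have hsub := intermediate_value_Ioo' huw hf.continuousOn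
    obtain ⟨z, hz, hz0⟩ := hsub (⟨h, hu⟩ : (0:ℝ) ∈ Ioo (f w) (f u))
    exact ⟨z, hz.1, le_of_lt hz.2, hz0⟩

lemma ivt_neg_pos (f : ℝ → ℝ) (hf : Continuous f) {u w : ℝ} (huw : u ≤ w) (hu : f u ≤ 0)
    (hw : 0 < f w) : ∃ z, u ≤ z ∧ z < w ∧ f z = 0 := by
  rcases eq_or_lt_of_le hu with h | h
  · refine ⟨u, le_refl _, lt_of_le_of_ne huw ?_, h⟩
    intro he; rw [← he, h] at hw; exact lt_irrefl _ hw
  · have hsub := intermediate_value_Ioo huw hf.continuousOn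
    obtain ⟨z, hz, hz0⟩ := hsub (⟨h, hw⟩ : (0:ℝ) ∈ Ioo (f u) (f w))
    exact ⟨z, le_of_lt hz.1, hz.2, hz0⟩

lemma dich_aux (L : ℝ → ℝ) (hL : ContDiff ℝ (⊤ : ℕ∞) L) (hper : Function.Periodic L 1)
    (hTC : TwoCrit L) (t : ℝ) (ht : deriv L t = 0) (hD : deriv (deriv L) t < 0) :
    ∀ s, t < s → s < t + 1 → L s < L t := by
  obtain ⟨t₁, t₂, ht₁, ht₂, ht₁₂, hset, hn₁, hn₂⟩ := hTC
  have hdper : Function.Periodic (deriv L) 1 := periodic_deriv L hper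
  have hcont : Continuous (deriv L) := hL.continuous_deriv (by simp)
  have hshift : ∀ x (k : ℤ), deriv L (x + k) = deriv L x := by
    intro x k; simpa using (hdper.int_mul k) x
  -- the class of t
  have hxt : t = Int.fract t + (⌊t⌋ : ℝ) := by rw [Int.fract]; ring
  have hdx : deriv L (Int.fract t) = 0 := by
    rw [← ht]; conv_rhs => rw [hxt]
    rw [hshift]
  have hxmem : Int.fract t ∈ ({t₁, t₂} : Set ℝ) := by
    rw [← hset]; exact ⟨⟨Int.fract_nonneg t, Int.fract_lt_one t⟩, hdx⟩
  -- uniform setup : x = fract t, u the other critical point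
  have key : ∀ u : ℝ, u ∈ Ico (0:ℝ) 1 → u ≠ Int.fract t →
      ({s | s ∈ Ico (0:ℝ) 1 ∧ deriv L s = 0} = {Int.fract t, u}) →
      ∀ s, t < s → s < t + 1 → L s < L t := by
    intro u hu hux hset'
    obtain ⟨k, hk1, hk2⟩ := rep_exists t u
    set c := u + (k : ℝ) with hc_def
    have hdc : deriv L c = 0 := by
      rw [hc_def, hshift]
      have : u ∈ ({Int.fract t, u} : Set ℝ) := mem_insert_of_mem _ rfl
      rw [← hset'] at this; exact this.2
    have hclt : c < t + 1 := by
      rcases eq_or_lt_of_le hk2 with h | h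
      · exfalso
        -- c = t + 1 means u - fract t ∈ ℤ, |·| < 1, ≠ 0
        have : u + (k:ℝ) = Int.fract t + (⌊t⌋ : ℝ) + 1 := by rw [← hxt]; linarith [h]
        have h2 : u = Int.fract t + ((⌊t⌋ + 1 - k : ℤ) : ℝ) := by push_cast; linarith
        have hb1 : (-1 : ℝ) < ((⌊t⌋ + 1 - k : ℤ) : ℝ) := by
          have := hu.1; have := hu.2
          have := Int.fract_nonneg t; have := Int.fract_lt_one t
          linarith [h2]
        have hb2 : ((⌊t⌋ + 1 - k : ℤ) : ℝ) < 1 := by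
          have := hu.1; have := hu.2
          have := Int.fract_nonneg t; have := Int.fract_lt_one t
          linarith [h2]
        have : (⌊t⌋ + 1 - k : ℤ) = 0 := by
          have b1 : (-1 : ℤ) < ⌊t⌋ + 1 - k := by exact_mod_cast hb1
          have b2 : (⌊t⌋ + 1 - k : ℤ) < 1 := by exact_mod_cast hb2
          omega
        apply hux
        rw [h2, this]; simp
      · exact h
    -- zero characterization: only zero in (t, t+1) is c
    have hzero : ∀ z, t < z → z < t + 1 → deriv L z = 0 → z = c := by
      intro z h1 h2 h0
      have hdz : deriv L (Int.fract z) = 0 := by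
        rw [← h0]
        conv_rhs => rw [show z = Int.fract z + (⌊z⌋ : ℝ) by rw [Int.fract]; ring]
        rw [hshift]
      have hzmem : Int.fract z ∈ ({Int.fract t, u} : Set ℝ) := by
        rw [← hset']; exact ⟨⟨Int.fract_nonneg z, Int.fract_lt_one z⟩, hdz⟩
      have hez : z = Int.fract z + (⌊z⌋ : ℝ) := by rw [Int.fract]; ring
      rcases hzmem with h | h
      · exfalso
        rw [h] at hez
        have hzt : z - t = ((⌊z⌋ - ⌊t⌋ : ℤ) : ℝ) := by push_cast; linarith [hez, hxt]
        have hb1 : (0 : ℝ) < ((⌊z⌋ - ⌊t⌋ : ℤ) : ℝ) := by linarith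
        have hb2 : ((⌊z⌋ - ⌊t⌋ : ℤ) : ℝ) < 1 := by linarith
        have b1 : (0 : ℤ) < ⌊z⌋ - ⌊t⌋ := by exact_mod_cast hb1
        have b2 : (⌊z⌋ - ⌊t⌋ : ℤ) < 1 := by exact_mod_cast hb2
        omega
      · simp only [mem_singleton_iff] at h
        rw [h] at hez
        have : ⌊z⌋ = k := by
          apply rep_unique (x := u) (t := t)
          · rw [← hez]; exact h1
          · rw [← hez]; exact le_of_lt h2
          · exact hk1
          · exact hk2
        rw [hc_def, ← this]; exact hez
    -- derivative sign near t
    have hdiff : HasDerivAt (deriv L) (deriv (deriv L) t) t := by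
      have h1 : ContDiff ℝ (∞ : WithTop ℕ∞) L := hL.of_le (by simp)
      have h2 := (contDiff_infty_iff_deriv.mp h1).2
      exact (h2.differentiable (by simp) t).hasDerivAt
    have hslope := hasDerivAt_iff_tendsto_slope.mp hdiff
    have hev : ∀ᶠ s in nhdsWithin t {t}ᶜ, slope (deriv L) t s < 0 :=
      hslope.eventually (gt_mem_nhds hD)
    obtain ⟨δ, hδ, hball⟩ := Metric.mem_nhdsWithin_iff.mp hev
    have hslope_neg : ∀ s : ℝ, s ≠ t → |s - t| < δ → deriv L s / (s - t) < 0 := by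
      intro s hs hd
      have hmem : s ∈ Metric.ball t δ ∩ {t}ᶜ := ⟨by simpa [Real.dist_eq] using hd, hs⟩
      have := hball hmem
      simpa [slope, ht, sub_zero, div_eq_inv_mul] using this
    -- a point with negative derivative in (t, c)
    have hs₁ : ∃ s₁, t < s₁ ∧ s₁ < c ∧ deriv L s₁ < 0 := by
      refine ⟨min (t + δ / 2) ((t + c) / 2), by
        apply lt_min <;> linarith, ?_, ?_⟩
      · exact lt_of_le_of_lt (min_le_right _ _) (by linarith)
      · set s₁ := min (t + δ / 2) ((t + c) / 2)
        have h1 : t < s₁ := lt_min (by linarith) (by linarith)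
        have h2 : |s₁ - t| < δ := by
          rw [abs_of_pos (by linarith)]
          have := min_le_left (t + δ / 2) ((t + c) / 2)
          simp only [s₁]; linarith [min_le_left (t + δ / 2) ((t + c) / 2)]
        have := hslope_neg s₁ (by intro h; rw [h] at h1; exact lt_irrefl _ h1) h2
        by_contra hcon; push_neg at hcon
        have : 0 ≤ deriv L s₁ / (s₁ - t) := div_nonneg hcon (by linarith)
        linarith
    -- a point with positive derivative in (c, t+1)
    have hs₂ : ∃ s₂, c < s₂ ∧ s₂ < t + 1 ∧ 0 < deriv L s₂ := by
      set σ := max (t - δ / 2) ((c - 1 + t) / 2) with hσ_def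
      have hσ1 : σ < t := by
        apply max_lt <;> linarith
      have hσ2 : c - 1 < σ := lt_of_lt_of_le (by linarith) (le_max_right _ _)
      have h2 : |σ - t| < δ := by
        rw [abs_of_neg (by linarith)]
        have := le_max_left (t - δ / 2) ((c - 1 + t) / 2)
        linarith
      have hsneg := hslope_neg σ (by intro h; rw [h] at hσ1; exact lt_irrefl _ hσ1) h2
      have hpos : 0 < deriv L σ := by
        by_contra hcon; push_neg at hcon
        have : 0 ≤ deriv L σ / (σ - t) := div_nonneg_iff.mpr (Or.inr ⟨hcon, by linarith⟩)
        linarith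
      refine ⟨σ + 1, by linarith, by linarith, ?_⟩
      rw [hdper σ]; exact hpos
    obtain ⟨s₁, hs₁1, hs₁2, hs₁3⟩ := hs₁
    obtain ⟨s₂, hs₂1, hs₂2, hs₂3⟩ := hs₂
    -- deriv L < 0 on (t, c)
    have neg_left : ∀ s, t < s → s < c → deriv L s < 0 := by
      intro s h1 h2
      rcases lt_trichotomy (deriv L s) 0 with h | h | h
      · exact h
      · exact absurd (hzero s h1 (by linarith) h) (by intro he; rw [he] at h2; exact lt_irrefl _ h2)
      · rcases lt_trichotomy s s₁ with hss | hss | hss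
        · obtain ⟨z, hz1, hz2, hz0⟩ := ivt_pos_neg (deriv L) hcont (le_of_lt hss) h (le_of_lt hs₁3)
          have := hzero z (by linarith) (by linarith) hz0
          rw [this] at hz2; linarith
        · rw [hss] at h; linarith
        · obtain ⟨z, hz1, hz2, hz0⟩ := ivt_neg_pos (deriv L) hcont (le_of_lt hss) (le_of_lt hs₁3) h
          have := hzero z (by linarith) (by linarith) hz0
          rw [this] at hz2; linarith
    -- deriv L > 0 on (c, t+1)
    have pos_right : ∀ s, c < s → s < t + 1 → 0 < deriv L s := by
      intro s h1 h2
      rcases lt_trichotomy (deriv L s) 0 with h | h | h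
      · rcases lt_trichotomy s s₂ with hss | hss | hss
        · obtain ⟨z, hz1, hz2, hz0⟩ := ivt_neg_pos (deriv L) hcont (le_of_lt hss) (le_of_lt h) hs₂3
          have := hzero z (by linarith) (by linarith) hz0
          rw [this] at hz1; linarith
        · rw [hss] at h; linarith
        · obtain ⟨z, hz1, hz2, hz0⟩ := ivt_pos_neg (deriv L) hcont (le_of_lt hss) hs₂3 (le_of_lt h)
          have := hzero z (by linarith) (by linarith) hz0
          rw [this] at hz1; linarith
      · exact absurd (hzero s (by linarith) h2 h) (by intro he; rw [he] at h1; exact lt_irrefl _ h1)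
      · exact h
    have m1 : StrictAntiOn L (Icc t c) := by
      apply strictAntiOn_of_deriv_neg (convex_Icc _ _) hL.continuous.continuousOn
      intro x hx; rw [interior_Icc] at hx; exact neg_left x hx.1 hx.2
    have m2 : StrictMonoOn L (Icc c (t + 1)) := by
      apply strictMonoOn_of_deriv_pos (convex_Icc _ _) hL.continuous.continuousOn
      intro x hx; rw [interior_Icc] at hx; exact pos_right x hx.1 hx.2
    intro s h1 h2
    rcases le_or_gt s c with h | h
    · exact m1 (left_mem_Icc.mpr (by linarith)) ⟨le_of_lt h1, h⟩ h1
    · have : L s < L (t + 1) :=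
        m2 ⟨le_of_lt h, le_of_lt h2⟩ (right_mem_Icc.mpr (by linarith)) h2
      rw [hper t] at this; exact this
  -- dispatch on which critical point t is congruent to
  rcases hxmem with hx | hx
  · exact key t₂ ht₂ (by rw [hx]; exact fun h => ht₁₂ h.symm) (by rw [hset, hx])
  · simp only [mem_singleton_iff] at hx
    exact key t₁ ht₁ (by rw [hx]; exact ht₁₂) (by rw [hset, hx]; exact pair_comm _ _)

lemma twoCrit_dichotomy (L : ℝ → ℝ) (hL : ContDiff ℝ (⊤ : ℕ∞) L) (hper : Function.Periodic L 1)
    (hTC : TwoCrit L) (t : ℝ) (ht : deriv L t = 0) (hD : deriv (deriv L) t ≠ 0) :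
    (∀ s, t < s → s < t + 1 → L s < L t) ∨ (∀ s, t < s → s < t + 1 → L t < L s) := by
  rcases lt_or_gt_of_ne hD with h | h
  · exact Or.inl (dich_aux L hL hper hTC t ht h)
  · right
    have hneg := dich_aux (fun s => -L s) hL.neg (by intro x; simp [hper x]) hTC.neg t (by rw [deriv.fun_neg, ht, neg_zero]) ?_
    · intro s h1 h2
      have := hneg s h1 h2
      simpa using this
    · have e1 : deriv (fun s => -L s) = fun s => -deriv L s := funext fun x => deriv.neg
      rw [e1]
      have e2 : deriv (fun s => -deriv L s) t = -deriv (deriv L) t := deriv.neg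
      rw [e2]; linarith

lemma near_boundary (Ω : Set (ℝ × ℝ)) (X : ℝ → ℝ × ℝ) (hXrange : Set.range X = frontier Ω)
    (s : ℝ) (g : ℝ × ℝ → ℝ) (hg : Continuous g) (c : ℝ) (hc : c < g (X s)) :
    ∃ p ∈ Ω, c < g p := by
  have hfr : X s ∈ frontier Ω := by rw [← hXrange]; exact mem_range_self s
  have hcl : X s ∈ closure Ω := frontier_subset_closure hfr
  have hO : IsOpen {x : ℝ × ℝ | c < g x} := isOpen_lt continuous_const hg
  obtain ⟨p, hp1, hp2⟩ := mem_closure_iff.mp hcl _ hO hc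
  exact ⟨p, hp2, hp1⟩

lemma exit_ray (Ω : Set (ℝ × ℝ)) (hΩo : IsOpen Ω) (hΩb : Bornology.IsBounded Ω)
    (X : ℝ → ℝ × ℝ) (hXrange : Set.range X = frontier Ω)
    (horient : ∀ t : ℝ, ∀ p ∈ Ω, openSegment ℝ (X t) p ⊆ Ω →
      0 ≤ (deriv X t).1 * (p - X t).2 - (deriv X t).2 * (p - X t).1)
    (p : ℝ × ℝ) (hp : p ∈ Ω) (v : ℝ × ℝ) (hv : v ≠ 0) :
    ∃ r : ℝ, 0 < r ∧ ∃ s : ℝ, X s = p + r • v ∧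
      (deriv X s).1 * v.2 - (deriv X s).2 * v.1 ≤ 0 := by
  have hvn : 0 < ‖v‖ := norm_pos_iff.mpr hv
  set f : ℝ → ℝ × ℝ := fun r => p + r • v with hf_def
  have hdist : ∀ a b : ℝ, ‖f a - f b‖ = |a - b| * ‖v‖ := by
    intro a b
    have : f a - f b = (a - b) • v := by simp only [hf_def, sub_smul]; abel
    rw [this, norm_smul, Real.norm_eq_abs]
  set S := {r : ℝ | 0 ≤ r ∧ ∀ r' ∈ Icc (0:ℝ) r, f r' ∈ Ω} with hS_def
  have h0S : (0:ℝ) ∈ S := by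
    refine ⟨le_refl _, ?_⟩
    intro r' hr'
    have : r' = 0 := le_antisymm hr'.2 hr'.1
    rw [this]; simpa [hf_def] using hp
  have hSne : S.Nonempty := ⟨0, h0S⟩
  obtain ⟨R, hR⟩ := (isBounded_iff_forall_norm_le).mp hΩb
  have hbdd : BddAbove S := by
    refine ⟨(R + ‖p‖) / ‖v‖, ?_⟩
    intro r hr
    have hfr : f r ∈ Ω := hr.2 r ⟨hr.1, le_refl r⟩
    have h1 : ‖f r - f 0‖ = |r - 0| * ‖v‖ := hdist r 0
    have h2 : ‖f r‖ ≤ R := hR _ hfr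
    have h3 : ‖f r - f 0‖ ≤ ‖f r‖ + ‖f 0‖ := norm_sub_le _ _
    have h4 : f 0 = p := by simp [hf_def]
    rw [h4] at h1
    rw [h4] at h3
    rw [sub_zero, abs_of_nonneg hr.1] at h1
    rw [le_div_iff₀ hvn]
    nlinarith
  set r₀ := sSup S with hr₀_def
  -- r₀ > 0
  obtain ⟨ε, hε, hball⟩ := Metric.isOpen_iff.mp hΩo p hp
  have hsmall : ε / (2 * ‖v‖) ∈ S := by
    constructor
    · positivity
    · intro r' hr'
      apply hball
      rw [Metric.mem_ball, dist_eq_norm]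
      have hsub : f r' - p = r' • v := by simp [hf_def]
      rw [hsub, norm_smul, Real.norm_eq_abs, abs_of_nonneg hr'.1]
      calc r' * ‖v‖ ≤ ε / (2 * ‖v‖) * ‖v‖ := by nlinarith [hr'.2]
        _ < ε := by rw [div_mul_eq_mul_div]; rw [div_lt_iff₀ (by positivity)]; nlinarith
  have hr₀pos : 0 < r₀ := lt_of_lt_of_le (by positivity) (le_csSup hbdd hsmall)
  have hIco : ∀ r', 0 ≤ r' → r' < r₀ → f r' ∈ Ω := by
    intro r' h1 h2
    obtain ⟨r, hrS, hrr⟩ := exists_lt_of_lt_csSup hSne h2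
    exact hrS.2 r' ⟨h1, le_of_lt hrr⟩
  have hnotin : f r₀ ∉ Ω := by
    intro hin
    obtain ⟨δ', hδ', hball'⟩ := Metric.isOpen_iff.mp hΩo _ hin
    set δ := δ' / (2 * ‖v‖) with hδ_def
    have hδpos : 0 < δ := by positivity
    have : r₀ + δ ∈ S := by
      constructor
      · linarith
      · intro r' hr'
        rcases lt_or_ge r' r₀ with h | h
        · exact hIco r' hr'.1 h
        · apply hball'
          rw [Metric.mem_ball, dist_eq_norm, hdist]
          have : |r' - r₀| ≤ δ := by
            rw [abs_of_nonneg (by linarith)]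
            linarith [hr'.2]
          calc |r' - r₀| * ‖v‖ ≤ δ * ‖v‖ := by nlinarith [abs_nonneg (r' - r₀)]
            _ < δ' := by rw [hδ_def, div_mul_eq_mul_div, div_lt_iff₀ (by positivity)]; nlinarith
    have := le_csSup hbdd this
    linarith
  have hclos : f r₀ ∈ closure Ω := by
    rw [mem_closure_iff]
    intro o ho hfo
    have hcont : Continuous f := by
      apply Continuous.add continuous_const
      exact Continuous.smul continuous_id continuous_const
    have : f ⁻¹' o ∈ nhds r₀ := hcont.continuousAt.preimage_mem_nhds (ho.mem_nhds hfo)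
    obtain ⟨η, hη, hball''⟩ := Metric.mem_nhds_iff.mp this
    set r' := max 0 (r₀ - η / 2) with hr'_def
    have h1 : 0 ≤ r' := le_max_left _ _
    have h2 : r' < r₀ := by
      apply max_lt hr₀pos
      linarith
    have h3 : |r' - r₀| < η := by
      rw [abs_of_neg (by linarith)]
      have : r₀ - η / 2 ≤ r' := le_max_right _ _
      linarith
    have : f r' ∈ o := hball'' (by rw [Metric.mem_ball, Real.dist_eq]; exact h3)
    exact ⟨f r', this, hIco r' h1 h2⟩
  have hfrontier : f r₀ ∈ frontier Ω := by
    rw [frontier, hΩo.interior_eq]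
    exact ⟨hclos, hnotin⟩
  rw [← hXrange] at hfrontier
  obtain ⟨s, hs⟩ := hfrontier
  refine ⟨r₀, hr₀pos, s, by rw [hs], ?_⟩
  have hseg : openSegment ℝ (X s) p ⊆ Ω := by
    rw [openSegment_eq_image]
    rintro z ⟨θ, hθ, hz⟩
    have hzf : z = f ((1 - θ) * r₀) := by
      rw [← hz, hs]
      show (1 - θ) • (p + r₀ • v) + θ • p = p + ((1 - θ) * r₀) • v
      module
    rw [hzf]
    apply hIco
    · have : 0 < 1 - θ := by linarith [hθ.2]
      positivity
    · have h1 : 1 - θ < 1 := by linarith [hθ.1]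
      nlinarith
  have := horient s p hp hseg
  have hps : p - X s = -(r₀ • v) := by
    rw [hs]
    show p - (p + r₀ • v) = -(r₀ • v)
    abel
  rw [hps] at this
  simp only [Prod.fst_neg, Prod.snd_neg, Prod.smul_fst, Prod.smul_snd, smul_eq_mul] at this
  nlinarith

lemma core_quadrant
    (Ω : Set (ℝ × ℝ)) (hΩo : IsOpen Ω) (hΩb : Bornology.IsBounded Ω)
    (X : ℝ → ℝ × ℝ) (hXrange : Set.range X = frontier Ω)
    (horient : ∀ t : ℝ, ∀ p ∈ Ω, openSegment ℝ (X t) p ⊆ Ω →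
      0 ≤ (deriv X t).1 * (p - X t).2 - (deriv X t).2 * (p - X t).1)
    (φ ψ : ℝ × ℝ → ℝ) (v : ℝ × ℝ) (κ : ℝ) (hκ : 0 < κ)
    (hφ : ∀ (x y : ℝ × ℝ) (r : ℝ), φ (x + r • y) = φ x + r * φ y)
    (hψ : ∀ (x y : ℝ × ℝ) (r : ℝ), ψ (x + r • y) = ψ x + r * ψ y)
    (hψc : Continuous ψ)
    (hφv : φ v = 0) (hψv : ψ v = 2)
    (hcross : ∀ u : ℝ × ℝ, u.1 * v.2 - u.2 * v.1 = κ * φ u)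
    (hGC : ContDiff ℝ (⊤ : ℕ∞) (fun s => φ (X s))) (hFC : ContDiff ℝ (⊤ : ℕ∞) (fun s => ψ (X s)))
    (hGper : Function.Periodic (fun s => φ (X s)) 1)
    (hFper : Function.Periodic (fun s => ψ (X s)) 1)
    (hGTC : TwoCrit (fun s => φ (X s))) (hFTC : TwoCrit (fun s => ψ (X s)))
    (hderivG : ∀ s, deriv (fun r => φ (X r)) s = φ (deriv X s))
    (t : ℝ) (hGt : 0 < deriv (fun s => φ (X s)) t) (hFt : 0 < deriv (fun s => ψ (X s)) t)
    (p : ℝ × ℝ) (hp : p ∈ Ω) (ha : φ (X t) ≤ φ p) (hb : ψ p ≤ ψ (X t)) : False := by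
  set G : ℝ → ℝ := fun s => φ (X s) with hG_def
  set F : ℝ → ℝ := fun s => ψ (X s) with hF_def
  have hφ0 : φ 0 = 0 := by
    have h := hφ 0 0 (-1)
    rw [show (0:ℝ×ℝ) + (-1:ℝ) • (0:ℝ×ℝ) = 0 by simp] at h
    linarith
  have hψ0 : ψ 0 = 0 := by
    have h := hψ 0 0 (-1)
    rw [show (0:ℝ×ℝ) + (-1:ℝ) • (0:ℝ×ℝ) = 0 by simp] at h
    linarith
  have hφneg : φ (-v) = 0 := by
    have h := hφ 0 v (-1)
    rw [show (0:ℝ×ℝ) + (-1:ℝ) • v = -v by simp] at h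
    rw [h, hφ0, hφv]; ring
  have hψneg : ψ (-v) = -2 := by
    have h := hψ 0 v (-1)
    rw [show (0:ℝ×ℝ) + (-1:ℝ) • v = -v by simp] at h
    rw [h, hψ0, hψv]; ring
  have hv : v ≠ 0 := by
    intro h; rw [h, hψ0] at hψv; norm_num at hψv
  have hdGper : Function.Periodic (deriv G) 1 := periodic_deriv G hGper
  obtain ⟨d₁, d₂, hd₁t, hd₁₂, hd₂t, gpos1, gneg, gpos3, gm1, gm2, gm3⟩ :=
    twoCrit_structure G hGC hGper hGTC t hGt
  obtain ⟨c₁, c₂, hc₁t, hc₁₂, hc₂t, fpos1, fneg, fpos3, fm1, fm2, fm3⟩ :=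
    twoCrit_structure F hFC hFper hFTC t hFt
  -- Step W : downward exit from p gives c₁ < d₁
  have hc₁d₁ : c₁ < d₁ := by
    obtain ⟨r, hr, s_w, hXsw, hcr⟩ := exit_ray Ω hΩo hΩb X hXrange horient p hp (-v)
      (neg_ne_zero.mpr hv)
    have hGsw : G s_w = φ p := by
      rw [hG_def]; simp only; rw [hXsw, hφ, hφneg]; ring
    have hFsw : F s_w = ψ p - 2 * r := by
      rw [hF_def]; simp only; rw [hXsw, hψ, hψneg]; ring
    have hdGsw : 0 ≤ deriv G s_w := by
      have h1 : (deriv X s_w).1 * (-v).2 - (deriv X s_w).2 * (-v).1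
          = -((deriv X s_w).1 * v.2 - (deriv X s_w).2 * v.1) := by
        simp only [Prod.fst_neg, Prod.snd_neg]; ring
      rw [h1, hcross] at hcr
      have := hderivG s_w
      rw [hG_def]
      nlinarith [hcr]
    obtain ⟨k, hk1, hk2⟩ := rep_exists t s_w
    set w := s_w + (k : ℝ) with hw_def
    have hGw : G w = φ p := by rw [hw_def, periodic_shift hGper]; exact hGsw
    have hFw : F w = ψ p - 2 * r := by rw [hw_def, periodic_shift hFper]; exact hFsw
    have hdGw : 0 ≤ deriv G w := by rw [hw_def, periodic_shift hdGper]; exact hdGsw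
    have hwlt : w < t + 1 := by
      rcases eq_or_lt_of_le hk2 with h | h
      · exfalso
        have hFt1 : F (t + 1) = F t := hFper t
        rw [← h, hFw] at hFt1
        have hbb : ψ p ≤ F t := hb
        linarith
      · exact h
    have hwd₁ : w ≤ d₁ := by
      by_contra h
      push_neg at h
      rcases lt_or_ge w d₂ with h2 | h2
      · exact absurd (gneg w h h2) (by linarith)
      · have hGlt : G w < G (t + 1) :=
          gm3 ⟨h2, le_of_lt hwlt⟩ (right_mem_Icc.mpr (by linarith)) hwlt
        rw [hGper t, hGw] at hGlt
        have haa : G t ≤ φ p := ha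
        linarith
    have hwc₁ : c₁ < w := by
      by_contra h
      push_neg at h
      have : F t < F w := fm1 ⟨le_refl _, by linarith⟩ ⟨by linarith, h⟩ hk1
      rw [hFw] at this
      linarith
    linarith
  -- Step M : maximum of F on [d₁, d₂] is strictly below F c₁
  have hFcont : Continuous F := hFC.continuous
  have hGcont : Continuous G := hGC.continuous
  obtain ⟨ξ, hξmem, hξmax⟩ := isCompact_Icc.exists_isMaxOn (nonempty_Icc.mpr (le_of_lt hd₁₂))
    hFcont.continuousOn
  have hξlt : F ξ < F c₁ := by
    have hξ1 : c₁ < ξ := lt_of_lt_of_le hc₁d₁ hξmem.1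
    rcases le_or_gt ξ c₂ with h | h
    · exact fm2 (left_mem_Icc.mpr (le_of_lt hc₁₂)) ⟨le_of_lt hξ1, h⟩ hξ1
    · have h1 : F ξ < F (t + 1) :=
        fm3 ⟨le_of_lt h, le_of_lt (lt_of_le_of_lt hξmem.2 hd₂t)⟩
          (right_mem_Icc.mpr (by linarith)) (lt_of_le_of_lt hξmem.2 hd₂t)
      have h2 : F t < F c₁ := fm1 (left_mem_Icc.mpr (le_of_lt hc₁t)) 
        (right_mem_Icc.mpr (le_of_lt hc₁t)) hc₁t
      rw [hFper t] at h1
      linarith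
  -- Step P' : an interior point with large ψ value
  obtain ⟨p', hp', hψp'⟩ := near_boundary Ω X hXrange c₁ ψ hψc (F ξ) hξlt
  -- Step V : upward exit from p'
  obtain ⟨r₂, hr₂, s_v, hXsv, hcr₂⟩ := exit_ray Ω hΩo hΩb X hXrange horient p' hp' v hv
  have hFsv : F s_v = ψ p' + 2 * r₂ := by
    rw [hF_def]; simp only; rw [hXsv, hψ, hψv]; ring
  have hdGsv : deriv G s_v ≤ 0 := by
    rw [hcross] at hcr₂
    have := hderivG s_v
    rw [hG_def]
    nlinarith [hcr₂]
  obtain ⟨k', hk'1, hk'2⟩ := rep_exists t s_v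
  set m := s_v + (k' : ℝ) with hm_def
  have hFm : F m = ψ p' + 2 * r₂ := by rw [hm_def, periodic_shift hFper]; exact hFsv
  have hdGm : deriv G m ≤ 0 := by rw [hm_def, periodic_shift hdGper]; exact hdGsv
  have hmlt : m < t + 1 := by
    rcases eq_or_lt_of_le hk'2 with h | h
    · exfalso
      have : deriv G (t + 1) = deriv G t := hdGper t
      rw [← h] at this
      rw [this] at hdGm
      linarith
    · exact h
  have hmem : m ∈ Icc d₁ d₂ := by
    constructor
    · by_contra h
      push_neg at h
      exact absurd (gpos1 m (le_of_lt hk'1) h) (by linarith)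
    · by_contra h
      push_neg at h
      exact absurd (gpos3 m h (le_of_lt hmlt)) (by linarith)
  have : F m ≤ F ξ := hξmax hmem
  rw [hFm] at this
  linarith

lemma at_strict_max
    (Ω : Set (ℝ × ℝ)) (hΩo : IsOpen Ω) (hΩb : Bornology.IsBounded Ω)
    (X : ℝ → ℝ × ℝ) (hXrange : Set.range X = frontier Ω)
    (horient : ∀ t : ℝ, ∀ p ∈ Ω, openSegment ℝ (X t) p ⊆ Ω →
      0 ≤ (deriv X t).1 * (p - X t).2 - (deriv X t).2 * (p - X t).1)
    (φ ψ : ℝ × ℝ → ℝ) (w : ℝ × ℝ) (κ : ℝ) (hκ : 0 < κ)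
    (hφ : ∀ (x y : ℝ × ℝ) (r : ℝ), φ (x + r • y) = φ x + r * φ y)
    (hφc : Continuous φ)
    (hφw : φ w = 2) (hψw : ψ w = 0)
    (hcross : ∀ u : ℝ × ℝ, u.1 * w.2 - u.2 * w.1 = -κ * ψ u)
    (hFC : ContDiff ℝ (⊤ : ℕ∞) (fun s => ψ (X s)))
    (hFper : Function.Periodic (fun s => ψ (X s)) 1)
    (hFTC : TwoCrit (fun s => ψ (X s)))
    (hGper : Function.Periodic (fun s => φ (X s)) 1)
    (hGc : Continuous (fun s => φ (X s)))
    (hderivF : ∀ s, deriv (fun r => ψ (X r)) s = ψ (deriv X s))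
    (t : ℝ)
    (hFtne : deriv (fun s => ψ (X s)) t ≠ 0)
    (hmax : ∀ s, t < s → s < t + 1 → φ (X s) < φ (X t)) :
    0 < deriv (fun s => ψ (X s)) t ∧ ∀ p ∈ Ω, φ p < φ (X t) := by
  set G : ℝ → ℝ := fun s => φ (X s) with hG_def
  set F : ℝ → ℝ := fun s => ψ (X s) with hF_def
  have hφ0 : φ 0 = 0 := by
    have h := hφ 0 0 (-1)
    rw [show (0:ℝ×ℝ) + (-1:ℝ) • (0:ℝ×ℝ) = 0 by simp] at h
    linarith
  have hw : w ≠ 0 := by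
    intro h; rw [h, hφ0] at hφw; norm_num at hφw
  -- global bound for G
  have hGle : ∀ s, G s ≤ G t := by
    intro s
    obtain ⟨k, hk1, hk2⟩ := rep_exists t s
    have hGs : G s = G (s + (k:ℝ)) := (periodic_shift hGper s k).symm
    rcases eq_or_lt_of_le hk2 with h | h
    · rw [hGs, h]; rw [hGper t]
    · rw [hGs]; exact le_of_lt (hmax _ hk1 h)
  -- part 2
  have part2 : ∀ p ∈ Ω, φ p < φ (X t) := by
    intro p hp
    obtain ⟨r, hr, s, hXs, _⟩ := exit_ray Ω hΩo hΩb X hXrange horient p hp w hw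
    have h1 : G s = φ p + 2 * r := by
      rw [hG_def]; simp only; rw [hXs, hφ, hφw]; ring
    have h2 : G s ≤ G t := hGle s
    have : φ p < G s := by rw [h1]; linarith
    calc φ p < G s := this
      _ ≤ G t := h2
  refine ⟨?_, part2⟩
  -- part 1
  rcases lt_or_gt_of_ne hFtne with hFt | hFt
  swap
  · exact hFt
  exfalso
  -- apply structure to -F
  set N : ℝ → ℝ := fun s => -(ψ (X s)) with hN_def
  have hNd : deriv N = fun s => -deriv F s := funext fun x => deriv.neg
  have hNC : ContDiff ℝ (⊤ : ℕ∞) N := hFC.neg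
  have hNper : Function.Periodic N 1 := by
    intro x
    show -F (x + 1) = -F x
    rw [hFper x]
  have hNTC : TwoCrit N := hFTC.neg
  have hNt : 0 < deriv N t := by rw [hNd]; simp only; linarith
  obtain ⟨c₁, c₂, hc₁t, hc₁₂, hc₂t, npos1, nneg, npos3, _, _, _⟩ :=
    twoCrit_structure N hNC hNper hNTC t hNt
  have hdF : ∀ s, deriv F s = -deriv N s := by intro s; rw [hNd]; simp
  -- max of G on [c₁, c₂]
  obtain ⟨ξ, hξmem, hξmax⟩ := isCompact_Icc.exists_isMaxOn (nonempty_Icc.mpr (le_of_lt hc₁₂))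
    hGc.continuousOn
  have hξlt : G ξ < G t :=
    hmax ξ (lt_of_lt_of_le hc₁t hξmem.1) (lt_of_le_of_lt hξmem.2 hc₂t)
  obtain ⟨p', hp', hφp'⟩ := near_boundary Ω X hXrange t φ hφc (G ξ) hξlt
  obtain ⟨r, hr, s, hXs, hcr⟩ := exit_ray Ω hΩo hΩb X hXrange horient p' hp' w hw
  have hGs : G s = φ p' + 2 * r := by
    rw [hG_def]; simp only; rw [hXs, hφ, hφw]; ring
  have hdFs : 0 ≤ deriv F s := by
    rw [hcross] at hcr
    have := hderivF s
    rw [hF_def]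
    nlinarith [hcr]
  have hdNs : deriv N s ≤ 0 := by rw [hNd]; simp only; linarith [hdFs]
  obtain ⟨k, hk1, hk2⟩ := rep_exists t s
  set m := s + (k : ℝ) with hm_def
  have hGm : G m = φ p' + 2 * r := by rw [hm_def, periodic_shift hGper]; exact hGs
  have hdNm : deriv N m ≤ 0 := by
    rw [hm_def, periodic_shift (periodic_deriv N hNper)]; exact hdNs
  have hmlt : m < t + 1 := by
    rcases eq_or_lt_of_le hk2 with h | h
    · exfalso
      have hh : deriv N (t + 1) = deriv N t := periodic_deriv N hNper t
      rw [← h] at hh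
      rw [hh] at hdNm
      linarith
    · exact h
  have hmmem : m ∈ Icc c₁ c₂ := by
    constructor
    · by_contra h
      push_neg at h
      exact absurd (npos1 m (le_of_lt hk1) h) (by linarith)
    · by_contra h
      push_neg at h
      exact absurd (npos3 m h (le_of_lt hmlt)) (by linarith)
  have h1 : G m ≤ G ξ := hξmax hmmem
  rw [hGm] at h1
  linarith

lemma second_deriv_ne (L : ℝ → ℝ) (hper : Function.Periodic L 1) (hTC : TwoCrit L)
    (t : ℝ) (ht : deriv L t = 0) : deriv (deriv L) t ≠ 0 := by
  obtain ⟨t₁, t₂, ht₁, ht₂, _, hset, hn₁, hn₂⟩ := hTC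
  have hdper := periodic_deriv L hper
  have hd2per := periodic_deriv _ hdper
  have hxt : t = Int.fract t + (⌊t⌋ : ℝ) := by rw [Int.fract]; ring
  have hdx : deriv L (Int.fract t) = 0 := by
    rw [← ht]
    conv_rhs => rw [hxt]
    rw [periodic_shift hdper]
  have hxmem : Int.fract t ∈ ({t₁, t₂} : Set ℝ) := by
    rw [← hset]; exact ⟨⟨Int.fract_nonneg t, Int.fract_lt_one t⟩, hdx⟩
  have hkey : deriv (deriv L) t = deriv (deriv L) (Int.fract t) := by
    conv_lhs => rw [hxt]
    rw [periodic_shift hd2per]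
  rw [hkey]
  rcases hxmem with h | h
  · rw [h]; exact hn₁
  · simp only [mem_singleton_iff] at h; rw [h]; exact hn₂

lemma deriv_ellP (lam : ℝ) (X : ℝ → ℝ × ℝ) (hXs : ContDiff ℝ (⊤ : ℕ∞) X) (s : ℝ) :
    deriv (fun r => ellP lam (X r)) s = ellP lam (deriv X s) := by
  have hX : HasDerivAt X (deriv X s) s := (hXs.differentiable (by simp) s).hasDerivAt
  have h1 : HasDerivAt (fun r => (X r).1) (deriv X s).1 s :=
    ((ContinuousLinearMap.fst ℝ ℝ ℝ).hasFDerivAt.comp_hasDerivAt s hX)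
  have h2 : HasDerivAt (fun r => (X r).2) (deriv X s).2 s :=
    ((ContinuousLinearMap.snd ℝ ℝ ℝ).hasFDerivAt.comp_hasDerivAt s hX)
  have h3 : HasDerivAt (fun r => (X r).1 / lam + (X r).2 / Real.sqrt (1 - lam ^ 2))
      ((deriv X s).1 / lam + (deriv X s).2 / Real.sqrt (1 - lam ^ 2)) s :=
    (h1.div_const lam).add (h2.div_const _)
  have he : (fun r => ellP lam (X r))
      = fun r => (X r).1 / lam + (X r).2 / Real.sqrt (1 - lam ^ 2) := rfl
  rw [he, h3.deriv]
  rfl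

lemma deriv_ellM (lam : ℝ) (X : ℝ → ℝ × ℝ) (hXs : ContDiff ℝ (⊤ : ℕ∞) X) (s : ℝ) :
    deriv (fun r => ellM lam (X r)) s = ellM lam (deriv X s) := by
  have hX : HasDerivAt X (deriv X s) s := (hXs.differentiable (by simp) s).hasDerivAt
  have h1 : HasDerivAt (fun r => (X r).1) (deriv X s).1 s :=
    ((ContinuousLinearMap.fst ℝ ℝ ℝ).hasFDerivAt.comp_hasDerivAt s hX)
  have h2 : HasDerivAt (fun r => (X r).2) (deriv X s).2 s :=
    ((ContinuousLinearMap.snd ℝ ℝ ℝ).hasFDerivAt.comp_hasDerivAt s hX)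
  have h3 : HasDerivAt (fun r => -(X r).1 / lam + (X r).2 / Real.sqrt (1 - lam ^ 2))
      (-(deriv X s).1 / lam + (deriv X s).2 / Real.sqrt (1 - lam ^ 2)) s :=
    (h1.neg.div_const lam).add (h2.div_const _)
  have he : (fun r => ellM lam (X r))
      = fun r => -(X r).1 / lam + (X r).2 / Real.sqrt (1 - lam ^ 2) := rfl
  rw [he]
  have h4 : HasDerivAt (fun r => -(X r).1 / lam + (X r).2 / Real.sqrt (1 - lam ^ 2))
      (ellM lam (deriv X s)) s := by
    convert h3 using 1; rfl
  exact h4.deriv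


/-- Let `Ω` be λ-simple. Then for every `y ∈ ∂Ω` and every `x ∈ Ω`, at least
one of `ν⁺(y)·ℓ⁻(x−y) > 0` or `ν⁻(y)·ℓ⁺(x−y) < 0` holds, where `ν^±(y) = sgn ∂_θ ℓ^±(y)`
along a positively oriented boundary parametrization. -/
theorem stmt4
    (Ω : Set (ℝ × ℝ)) (hΩo : IsOpen Ω) (hΩb : Bornology.IsBounded Ω)
    (hΩsc : SimplyConnectedSpace Ω)
    (lam : ℝ) (hlam : lam ∈ Ioo (0 : ℝ) 1)
    (X : ℝ → ℝ × ℝ) (hXs : ContDiff ℝ (⊤ : ℕ∞) X) (hXper : Function.Periodic X 1)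
    (hXinj : InjOn X (Ico 0 1)) (hXrange : range X = frontier Ω)
    (hXreg : ∀ t, deriv X t ≠ 0)
    (horient : ∀ t : ℝ, ∀ p ∈ Ω, openSegment ℝ (X t) p ⊆ Ω →
      0 ≤ (deriv X t).1 * (p - X t).2 - (deriv X t).2 * (p - X t).1)
    (hsimpP : TwoCrit (fun t => ellP lam (X t))) (hsimpM : TwoCrit (fun t => ellM lam (X t)))
    (t : ℝ) (p : ℝ × ℝ) (hp : p ∈ Ω) :
    0 < Real.sign (deriv (fun s => ellP lam (X s)) t) * ellM lam (p - X t) ∨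
    Real.sign (deriv (fun s => ellM lam (X s)) t) * ellP lam (p - X t) < 0 := by
  obtain ⟨hl0, hl1⟩ := hlam
  have hμ : 0 < Real.sqrt (1 - lam ^ 2) := Real.sqrt_pos.mpr (by nlinarith)
  set μ := Real.sqrt (1 - lam ^ 2) with hμ_def
  have hlne : lam ≠ 0 := ne_of_gt hl0
  have hμne : μ ≠ 0 := ne_of_gt hμ
  have hκ : 0 < lam * μ := by positivity
  -- linearity of the functionals
  have hPlin : ∀ (x y : ℝ × ℝ) (r : ℝ), ellP lam (x + r • y) = ellP lam x + r * ellP lam y := by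
    intro x y r
    simp only [ellP, Prod.fst_add, Prod.snd_add, Prod.smul_fst, Prod.smul_snd, smul_eq_mul]
    ring
  have hMlin : ∀ (x y : ℝ × ℝ) (r : ℝ), ellM lam (x + r • y) = ellM lam x + r * ellM lam y := by
    intro x y r
    simp only [ellM, Prod.fst_add, Prod.snd_add, Prod.smul_fst, Prod.smul_snd, smul_eq_mul]
    ring
  have hPnlin : ∀ (x y : ℝ × ℝ) (r : ℝ),
      -ellP lam (x + r • y) = -ellP lam x + r * -ellP lam y := by
    intro x y r; rw [hPlin]; ring
  have hMnlin : ∀ (x y : ℝ × ℝ) (r : ℝ),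
      -ellM lam (x + r • y) = -ellM lam x + r * -ellM lam y := by
    intro x y r; rw [hMlin]; ring
  -- continuity
  have hPc : Continuous (fun x : ℝ × ℝ => ellP lam x) := by
    simp only [ellP]; exact (continuous_fst.div_const _).add (continuous_snd.div_const _)
  have hMc : Continuous (fun x : ℝ × ℝ => ellM lam x) := by
    simp only [ellM]; exact (continuous_fst.neg.div_const _).add (continuous_snd.div_const _)
  -- smoothness of compositions
  have hPCD : ContDiff ℝ (⊤ : ℕ∞) (fun x : ℝ × ℝ => ellP lam x) := by
    simp only [ellP]; exact (contDiff_fst.div_const _).add (contDiff_snd.div_const _)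
  have hMCD : ContDiff ℝ (⊤ : ℕ∞) (fun x : ℝ × ℝ => ellM lam x) := by
    simp only [ellM]; exact (contDiff_fst.neg.div_const _).add (contDiff_snd.div_const _)
  have hGC : ContDiff ℝ (⊤ : ℕ∞) (fun s => ellP lam (X s)) := hPCD.comp hXs
  have hFC : ContDiff ℝ (⊤ : ℕ∞) (fun s => ellM lam (X s)) := hMCD.comp hXs
  -- periodicity
  have hGper : Function.Periodic (fun s => ellP lam (X s)) 1 :=
    fun x => congrArg (ellP lam) (hXper x)
  have hFper : Function.Periodic (fun s => ellM lam (X s)) 1 :=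
    fun x => congrArg (ellM lam) (hXper x)
  have hGnper : Function.Periodic (fun s => -ellP lam (X s)) 1 :=
    fun x => congrArg (fun z => -ellP lam z) (hXper x)
  have hFnper : Function.Periodic (fun s => -ellM lam (X s)) 1 :=
    fun x => congrArg (fun z => -ellM lam z) (hXper x)
  -- derivatives of compositions
  have hderivP : ∀ s, deriv (fun r => ellP lam (X r)) s = ellP lam (deriv X s) :=
    deriv_ellP lam X hXs
  have hderivM : ∀ s, deriv (fun r => ellM lam (X r)) s = ellM lam (deriv X s) :=
    deriv_ellM lam X hXs
  have hderivPn : ∀ s, deriv (fun r => -ellP lam (X r)) s = -ellP lam (deriv X s) := by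
    intro s; rw [deriv.fun_neg, hderivP s]
  have hderivMn : ∀ s, deriv (fun r => -ellM lam (X r)) s = -ellM lam (deriv X s) := by
    intro s; rw [deriv.fun_neg, hderivM s]
  -- difference identities
  have hPdiff : ellP lam (p - X t) = ellP lam p - ellP lam (X t) := by
    have h := hPlin p (X t) (-1)
    rw [show p + (-1 : ℝ) • X t = p - X t by simp [sub_eq_add_neg]] at h
    rw [h]; ring
  have hMdiff : ellM lam (p - X t) = ellM lam p - ellM lam (X t) := by
    have h := hMlin p (X t) (-1)
    rw [show p + (-1 : ℝ) • X t = p - X t by simp [sub_eq_add_neg]] at h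
    rw [h]; ring
  -- regularity : not both functionals vanish on deriv X t
  have hreg : ¬(ellP lam (deriv X t) = 0 ∧ ellM lam (deriv X t) = 0) := by
    rintro ⟨h1, h2⟩
    apply hXreg t
    simp only [ellP, ellM] at h1 h2
    rw [neg_div] at h2
    have e1 : (deriv X t).1 / lam = 0 := by linarith
    have e2 : (deriv X t).2 / μ = 0 := by linarith
    have f1 : (deriv X t).1 = 0 := by
      field_simp at e1; simpa using e1
    have f2 : (deriv X t).2 = 0 := by
      field_simp at e2; simpa using e2
    exact Prod.ext f1 f2
  -- abbreviations
  set A := deriv (fun s => ellP lam (X s)) t with hA_def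
  set B := deriv (fun s => ellM lam (X s)) t with hB_def
  rcases eq_or_ne A 0 with hA0 | hA0
  · -- Case A = 0 : prove the right disjunct
    right
    have hD := second_deriv_ne _ hGper hsimpP t hA0
    have hBne : B ≠ 0 := by
      intro hB0
      apply hreg
      exact ⟨by rw [← hderivP t]; exact hA0, by rw [← hderivM t]; exact hB0⟩
    rcases twoCrit_dichotomy _ hGC hGper hsimpP t hA0 hD with hmax | hmin
    · -- t is the maximum of ellP ∘ X : B > 0 and ellP p < ellP (X t)
      obtain ⟨hBpos, hlt⟩ := at_strict_max Ω hΩo hΩb X hXrange horient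
        (fun x => ellP lam x) (fun x => ellM lam x) (lam, μ) (lam * μ) hκ
        hPlin hPc
        (by simp only [ellP]; rw [div_self hlne, div_self hμne]; norm_num)
        (by simp only [ellM]; rw [div_self hμne, neg_div, div_self hlne]; ring)
        (by intro u; simp only [ellM]; rw [← hμ_def]; field_simp; try ring)
        hFC hFper hsimpM hGper hGC.continuous hderivM t hBne hmax
      have ha : ellP lam (p - X t) < 0 := by
        rw [hPdiff]; have := hlt p hp; linarith
      rw [Real.sign_of_pos hBpos]
      linarith
    · -- t is the minimum of ellP ∘ X : B < 0 and ellP p > ellP (X t)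
      have hBnne : deriv (fun s => -ellM lam (X s)) t ≠ 0 := by
        rw [hderivMn t]
        intro h
        apply hBne
        rw [hB_def, hderivM t]
        linarith [neg_eq_zero.mp h]
      obtain ⟨hBpos, hlt⟩ := at_strict_max Ω hΩo hΩb X hXrange horient
        (fun x => -ellP lam x) (fun x => -ellM lam x) (-lam, -μ) (lam * μ) hκ
        hPnlin hPc.neg
        (by simp only [ellP]; rw [neg_div, neg_div, div_self hlne, div_self hμne]; ring)
        (by simp only [ellM]; rw [neg_neg, neg_div, div_self hlne, div_self hμne]; ring)
        (by intro u; simp only [ellM]; rw [← hμ_def]; field_simp; try ring)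
        hFC.neg hFnper hsimpM.neg hGnper hGC.continuous.neg hderivMn t hBnne
        (by intro s h1 h2; have := hmin s h1 h2; linarith)
      have hBneg : B < 0 := by
        rw [hderivMn t] at hBpos
        rw [hB_def, hderivM t]
        linarith
      have ha : 0 < ellP lam (p - X t) := by
        rw [hPdiff]; have := hlt p hp; linarith
      rw [Real.sign_of_neg hBneg]
      nlinarith
  rcases eq_or_ne B 0 with hB0 | hB0
  · -- Case B = 0 : prove the left disjunct
    left
    have hD := second_deriv_ne _ hFper hsimpM t hB0
    have hAne : A ≠ 0 := hA0
    rcases twoCrit_dichotomy _ hFC hFper hsimpM t hB0 hD with hmax | hmin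
    · -- t is the maximum of ellM ∘ X : A < 0 and ellM p < ellM (X t)
      have hAnne : deriv (fun s => -ellP lam (X s)) t ≠ 0 := by
        rw [hderivPn t]
        intro h
        apply hAne
        rw [hA_def, hderivP t]
        linarith [neg_eq_zero.mp h]
      obtain ⟨hApos, hlt⟩ := at_strict_max Ω hΩo hΩb X hXrange horient
        (fun x => ellM lam x) (fun x => -ellP lam x) (-lam, μ) (lam * μ) hκ
        hMlin hMc
        (by simp only [ellM]; rw [neg_neg, div_self hlne, div_self hμne]; norm_num)
        (by simp only [ellP]; rw [neg_div, div_self hlne, div_self hμne]; ring)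
        (by intro u; simp only [ellP]; rw [← hμ_def]; field_simp; try ring)
        hGC.neg hGnper hsimpP.neg hFper hFC.continuous hderivPn t hAnne hmax
      have hAneg : A < 0 := by
        rw [hderivPn t] at hApos
        rw [hA_def, hderivP t]
        linarith
      have hb : ellM lam (p - X t) < 0 := by
        rw [hMdiff]; have := hlt p hp; linarith
      rw [Real.sign_of_neg hAneg]
      nlinarith
    · -- t is the minimum of ellM ∘ X : A > 0 and ellM p > ellM (X t)
      obtain ⟨hApos, hlt⟩ := at_strict_max Ω hΩo hΩb X hXrange horient
        (fun x => -ellM lam x) (fun x => ellP lam x) (lam, -μ) (lam * μ) hκ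
        hMnlin hMc.neg
        (by simp only [ellM]; rw [neg_div, div_self hlne, neg_div, div_self hμne]; ring)
        (by simp only [ellP]; rw [div_self hlne, neg_div, div_self hμne]; ring)
        (by intro u; simp only [ellP]; rw [← hμ_def]; field_simp; try ring)
        hGC hGper hsimpP hFnper hFC.continuous.neg hderivP t hAne
        (by intro s h1 h2; have := hmin s h1 h2; linarith)
      have hb : 0 < ellM lam (p - X t) := by
        rw [hMdiff]; have := hlt p hp; linarith
      rw [Real.sign_of_pos hApos]
      linarith
  -- main cases : A ≠ 0 and B ≠ 0
  by_contra hcon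
  push_neg at hcon
  obtain ⟨h1, h2⟩ := hcon
  rcases lt_or_gt_of_ne hA0 with hA | hA <;> rcases lt_or_gt_of_ne hB0 with hB | hB
  · -- A < 0, B < 0 : b ≥ 0, a ≤ 0
    rw [Real.sign_of_neg hA] at h1
    rw [Real.sign_of_neg hB] at h2
    have hbge : 0 ≤ ellM lam (p - X t) := by nlinarith
    have hale : ellP lam (p - X t) ≤ 0 := by nlinarith
    exact core_quadrant Ω hΩo hΩb X hXrange horient
      (fun x => -ellP lam x) (fun x => -ellM lam x) (lam, -μ) (lam * μ) hκ
      hPnlin hMnlin hMc.neg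
      (by simp only [ellP]; rw [div_self hlne, neg_div, div_self hμne]; ring)
      (by simp only [ellM]; rw [neg_div, div_self hlne, neg_div, div_self hμne]; ring)
      (by intro u; simp only [ellP]; rw [← hμ_def]; field_simp; try ring)
      hGC.neg hFC.neg hGnper hFnper hsimpP.neg hsimpM.neg hderivPn t
      (by rw [hderivPn t]; rw [hA_def, hderivP t] at hA; linarith)
      (by rw [hderivMn t]; rw [hB_def, hderivM t] at hB; linarith)
      p hp
      (by rw [hPdiff] at hale; linarith)
      (by rw [hMdiff] at hbge; linarith)
  · -- A < 0, B > 0 : b ≥ 0, a ≥ 0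
    rw [Real.sign_of_neg hA] at h1
    rw [Real.sign_of_pos hB] at h2
    have hbge : 0 ≤ ellM lam (p - X t) := by nlinarith
    have hage : 0 ≤ ellP lam (p - X t) := by nlinarith
    exact core_quadrant Ω hΩo hΩb X hXrange horient
      (fun x => ellM lam x) (fun x => -ellP lam x) (-lam, -μ) (lam * μ) hκ
      hMlin hPnlin hPc.neg
      (by simp only [ellM]; rw [neg_neg, div_self hlne, neg_div, div_self hμne]; ring)
      (by simp only [ellP]; rw [neg_div, neg_div, div_self hlne, div_self hμne]; ring)
      (by intro u; simp only [ellM]; rw [← hμ_def]; field_simp; try ring)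
      hFC hGC.neg hFper hGnper hsimpM hsimpP.neg hderivM t
      (by rw [hB_def] at hB; exact hB)
      (by rw [hderivPn t]; rw [hA_def, hderivP t] at hA; linarith)
      p hp
      (by rw [hMdiff] at hbge; linarith)
      (by rw [hPdiff] at hage; linarith)
  · -- A > 0, B < 0 : b ≤ 0, a ≤ 0
    rw [Real.sign_of_pos hA] at h1
    rw [Real.sign_of_neg hB] at h2
    have hble : ellM lam (p - X t) ≤ 0 := by nlinarith
    have hale : ellP lam (p - X t) ≤ 0 := by nlinarith
    exact core_quadrant Ω hΩo hΩb X hXrange horient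
      (fun x => -ellM lam x) (fun x => ellP lam x) (lam, μ) (lam * μ) hκ
      hMnlin hPlin hPc
      (by simp only [ellM]; rw [neg_div, div_self hlne, div_self hμne]; ring)
      (by simp only [ellP]; rw [div_self hlne, div_self hμne]; norm_num)
      (by intro u; simp only [ellM]; rw [← hμ_def]; field_simp; try ring)
      hFC.neg hGC hFnper hGper hsimpM.neg hsimpP hderivMn t
      (by rw [hderivMn t]; rw [hB_def, hderivM t] at hB; linarith)
      (by rw [hA_def] at hA; exact hA)
      p hp
      (by rw [hMdiff] at hble; linarith)
      (by rw [hPdiff] at hale; linarith)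
  · -- A > 0, B > 0 : b ≤ 0, a ≥ 0
    rw [Real.sign_of_pos hA] at h1
    rw [Real.sign_of_pos hB] at h2
    have hble : ellM lam (p - X t) ≤ 0 := by linarith
    have hage : 0 ≤ ellP lam (p - X t) := by linarith
    exact core_quadrant Ω hΩo hΩb X hXrange horient
      (fun x => ellP lam x) (fun x => ellM lam x) (-lam, μ) (lam * μ) hκ
      hPlin hMlin hMc
      (by simp only [ellP]; rw [neg_div, div_self hlne, div_self hμne]; ring)
      (by simp only [ellM]; rw [neg_neg, div_self hlne, div_self hμne]; norm_num)
      (by intro u; simp only [ellP]; rw [← hμ_def]; field_simp; try ring)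
      hGC hFC hGper hFper hsimpP hsimpM hderivP t
      (by rw [hA_def] at hA; exact hA)
      (by rw [hB_def] at hB; exact hB)
      p hp
      (by rw [hPdiff] at hage; linarith)
      (by rw [hMdiff] at hble; linarith)
end

section
/- Uniqueness in the linearization: if h₁, h₂ are C¹ diffeomorphisms of [−1,1] onto neighborhoods of 0 in ℝ with hⱼ(0)=0, hⱼ′(0)=1 and hⱼ ∘ f = a·hⱼ where a = f′(0) ∈ (0,1) and f : [−1,1] → (−1,1) is a C¹ map with f(0)=0, then h₁ = h₂. -/
open Set Filter Topology

/-- `h` is a `C¹` Schröder linearizer of `f` on `[-1,1]`: a `C¹` diffeomorphism of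
`[−1,1]` onto a neighborhood of `0` with `h(0)=0`, `h′(0)=1` and `h∘f = f′(0)·h`. -/
def IsC1Linearizer (f h : ℝ → ℝ) : Prop :=
  ContDiff ℝ 1 h ∧ InjOn h (Icc (-1) 1) ∧ (∀ x ∈ Icc (-1 : ℝ) 1, deriv h x ≠ 0) ∧
  h '' Icc (-1) 1 ∈ nhds (0 : ℝ) ∧
  h 0 = 0 ∧ deriv h 0 = 1 ∧ ∀ x ∈ Icc (-1 : ℝ) 1, h (f x) = deriv f 0 * h x

lemma slope_tendsto (h : ℝ → ℝ) (hc : ContDiff ℝ 1 h) (h0 : h 0 = 0) (hd : deriv h 0 = 1) :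
    Tendsto (fun z => h z / z) (𝓝[≠] (0:ℝ)) (𝓝 1) := by
  have := (hc.differentiable one_ne_zero 0).hasDerivAt
  rw [hd, hasDerivAt_iff_tendsto_slope] at this
  refine this.congr' ?_
  filter_upwards [self_mem_nhdsWithin] with z hz
  simp [slope_def_field, h0, div_eq_div_iff_comm]

/-- Uniqueness in the linearization: if `h₁, h₂` are `C¹` diffeomorphisms of
`[−1,1]` onto neighborhoods of `0` with `hⱼ(0)=0`, `hⱼ′(0)=1` and `hⱼ∘f = a·hⱼ` where
`a = f′(0) ∈ (0,1)` and `f : [−1,1] → (−1,1)` is `C¹` with `f(0)=0`, then `h₁ = h₂`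
on `[−1,1]`. -/
theorem stmt7 (f h₁ h₂ : ℝ → ℝ)
    (hf : ContDiff ℝ 1 f) (hmap : MapsTo f (Icc (-1) 1) (Ioo (-1) 1)) (hf0 : f 0 = 0)
    (ha : deriv f 0 ∈ Ioo (0 : ℝ) 1)
    (H₁ : IsC1Linearizer f h₁) (H₂ : IsC1Linearizer f h₂) :
    EqOn h₁ h₂ (Icc (-1) 1) := by
  obtain ⟨hc₁, hi₁, -, -, h₁0, hd₁, he₁⟩ := H₁
  obtain ⟨hc₂, hi₂, -, -, h₂0, hd₂, he₂⟩ := H₂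
  set a := deriv f 0 with ha_def
  have h0mem : (0:ℝ) ∈ Icc (-1:ℝ) 1 := by norm_num
  intro x hx
  rcases eq_or_ne x 0 with rfl | hx0
  · rw [h₁0, h₂0]
  -- iterates
  set y : ℕ → ℝ := fun n => f^[n] x with hy_def
  have hyIcc : ∀ n, y n ∈ Icc (-1:ℝ) 1 := by
    intro n; induction n with
    | zero => exact hx
    | succ n ih =>
      have : y (n+1) = f (y n) := Function.iterate_succ_apply' f n x
      rw [this]; exact Ioo_subset_Icc_self (hmap ih)
  have key₁ : ∀ n, h₁ (y n) = a ^ n * h₁ x := by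
    intro n; induction n with
    | zero => simp [hy_def]
    | succ n ih =>
      have : y (n+1) = f (y n) := Function.iterate_succ_apply' f n x
      rw [this, he₁ _ (hyIcc n), ih]; ring
  have key₂ : ∀ n, h₂ (y n) = a ^ n * h₂ x := by
    intro n; induction n with
    | zero => simp [hy_def]
    | succ n ih =>
      have : y (n+1) = f (y n) := Function.iterate_succ_apply' f n x
      rw [this, he₂ _ (hyIcc n), ih]; ring
  have h₁x : h₁ x ≠ 0 := fun h => hx0 (hi₁ hx h0mem (by rw [h, h₁0]))
  have hane : ∀ n, (a:ℝ) ^ n ≠ 0 := fun n => pow_ne_zero n (ne_of_gt ha.1)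
  have hyne : ∀ n, y n ≠ 0 := by
    intro n h
    have : h₁ (y n) = 0 := by rw [h, h₁0]
    rw [key₁ n] at this
    exact (mul_ne_zero (hane n) h₁x) this
  -- h₁ (y n) → 0
  have hpow : Tendsto (fun n => a ^ n * h₁ x) atTop (𝓝 0) := by
    have : Tendsto (fun n : ℕ => a ^ n) atTop (𝓝 0) :=
      tendsto_pow_atTop_nhds_zero_of_lt_one ha.1.le ha.2
    simpa using this.mul_const (h₁ x)
  have hh₁y : Tendsto (fun n => h₁ (y n)) atTop (𝓝 0) := by
    simpa [key₁] using hpow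
  -- convergent subsequence
  obtain ⟨L, hL, φ, hφ, hlim⟩ := isCompact_Icc.tendsto_subseq hyIcc
  have hL0 : L = 0 := by
    have t1 : Tendsto (fun n => h₁ (y (φ n))) atTop (𝓝 (h₁ L)) :=
      (hc₁.continuous.tendsto L).comp hlim
    have t2 : Tendsto (fun n => h₁ (y (φ n))) atTop (𝓝 0) :=
      hh₁y.comp hφ.tendsto_atTop
    have : h₁ L = 0 := tendsto_nhds_unique t1 t2
    exact hi₁ hL h0mem (by rw [this, h₁0])
  -- z n → 0 within {0}ᶜ
  have hz : Tendsto (fun n => y (φ n)) atTop (𝓝[≠] (0:ℝ)) := by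
    refine tendsto_nhdsWithin_of_tendsto_nhds_of_eventually_within _ (hL0 ▸ hlim) ?_
    exact Eventually.of_forall fun n => hyne (φ n)
  -- ratio tendsto 1
  have t1 := (slope_tendsto h₁ hc₁ h₁0 hd₁).comp hz
  have t2 := (slope_tendsto h₂ hc₂ h₂0 hd₂).comp hz
  have tratio : Tendsto (fun n => h₂ (y (φ n)) / h₁ (y (φ n))) atTop (𝓝 1) := by
    have h11 : (𝓝 ((1:ℝ)/1)) = 𝓝 1 := by norm_num
    have := t2.div t1 one_ne_zero
    rw [h11] at this
    refine this.congr fun n => ?_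
    simp only [Function.comp, Pi.div_apply]
    rw [div_div_div_cancel_right₀ (hyne (φ n))]
  -- but ratio is constant
  have hconst : ∀ n, h₂ (y (φ n)) / h₁ (y (φ n)) = h₂ x / h₁ x := by
    intro n
    rw [key₁, key₂, mul_div_mul_left _ _ (hane (φ n))]
  have : h₂ x / h₁ x = 1 := by
    refine tendsto_nhds_unique (l := atTop) ?_ tratio
    simp only [hconst]; exact tendsto_const_nhds
  field_simp at this
  exact this.symm
end

section
/- Let ε₀ > 0 and suppose r_j^±, z_j^± ∈ C^∞([0,ε₀); ℂ), j = 1,2, satisfy Re z_j^± > 0 and r_j^±(0) ≠ 0, and assume the function (x,ε) ↦ r₁^±(ε)(x ± iε z₁^±(ε))^{-1} − r₂^±(ε)(x ± iε z₂^±(ε))^{-1} extends to a C^∞ function on J × [0,ε₀) for an open interval J ∋ 0. Then all derivatives of r₁^± − r₂^± and z₁^± − z₂^± in ε vanish at ε = 0. -/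
open Set

open Filter Topology
open scoped ContDiff


private lemma auxP1 {s : Set ℝ} (hs : UniqueDiffOn ℝ s) {x₀ : ℝ} (hx : x₀ ∈ s) :
    ∀ (k : ℕ) (f g : ℝ → ℂ), ContDiffOn ℝ ∞ f s → ContDiffOn ℝ ∞ g s →
    (∀ m, m < k → iteratedDerivWithin m f s x₀ = 0) →
    iteratedDerivWithin k (fun t => f t * g t) s x₀ = iteratedDerivWithin k f s x₀ * g x₀ := by
  intro k
  induction k with
  | zero => intro f g _ _ _; simp
  | succ k IH =>
    intro f g hf hg hvan
    have hinf : ((⊤:ℕ∞) : WithTop ℕ∞) + 1 ≤ ∞ := by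
      norm_num
    have hf' : ContDiffOn ℝ ∞ (derivWithin f s) s := hf.derivWithin hs hinf
    have hg' : ContDiffOn ℝ ∞ (derivWithin g s) s := hg.derivWithin hs hinf
    have h1 : Set.EqOn (derivWithin (fun t => f t * g t) s)
        ((fun t => derivWithin f s t * g t) + fun t => f t * derivWithin g s t) s := by
      intro y hy
      exact derivWithin_fun_mul
        (hf.differentiableOn (by norm_num) y hy) (hg.differentiableOn (by norm_num) y hy)
    have hkle : ((k : ℕ) : WithTop ℕ∞) ≤ ∞ := by exact_mod_cast le_top
    have hvf' : ∀ m, m < k → iteratedDerivWithin m (derivWithin f s) s x₀ = 0 := by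
      intro m hm
      have h2 := hvan (m+1) (Nat.succ_lt_succ hm)
      rwa [iteratedDerivWithin_succ'] at h2
    calc iteratedDerivWithin (k+1) (fun t => f t * g t) s x₀
        = iteratedDerivWithin k (derivWithin (fun t => f t * g t) s) s x₀ :=
          congrFun iteratedDerivWithin_succ' _
      _ = iteratedDerivWithin k
            ((fun t => derivWithin f s t * g t) + fun t => f t * derivWithin g s t) s x₀ :=
          iteratedDerivWithin_congr h1 hx
      _ = iteratedDerivWithin k (fun t => derivWithin f s t * g t) s x₀
          + iteratedDerivWithin k (fun t => f t * derivWithin g s t) s x₀ :=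
          iteratedDerivWithin_add hx hs (((hf'.mul hg).of_le hkle).contDiffWithinAt hx) (((hf.mul hg').of_le hkle).contDiffWithinAt hx)
      _ = iteratedDerivWithin k (derivWithin f s) s x₀ * g x₀
          + iteratedDerivWithin k f s x₀ * derivWithin g s x₀ := by
          rw [IH (derivWithin f s) g hf' hg hvf',
            IH f (derivWithin g s) hf hg' (fun m hm => hvan m (hm.trans k.lt_succ_self))]
      _ = iteratedDerivWithin (k+1) f s x₀ * g x₀ := by
          rw [hvan k k.lt_succ_self, iteratedDerivWithin_succ']
          ring


private lemma auxP2 {s : Set ℝ} (hs : UniqueDiffOn ℝ s) {x₀ : ℝ} (hx : x₀ ∈ s) :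
    ∀ (k : ℕ) (f g : ℝ → ℂ), ContDiffOn ℝ ∞ f s → ContDiffOn ℝ ∞ g s →
    (∀ m, m < k → iteratedDerivWithin m f s x₀ = 0) →
    iteratedDerivWithin (k+1) (fun t => f t * g t) s x₀
      = iteratedDerivWithin (k+1) f s x₀ * g x₀
        + ((k:ℂ)+1) * iteratedDerivWithin k f s x₀ * derivWithin g s x₀ := by
  intro k
  induction k with
  | zero =>
    intro f g hf hg _
    have hu := hs.uniqueDiffWithinAt hx
    rw [iteratedDerivWithin_one, iteratedDerivWithin_one,
      derivWithin_fun_mul (hf.differentiableOn (by norm_num) x₀ hx)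
        (hg.differentiableOn (by norm_num) x₀ hx)]
    simp [iteratedDerivWithin_zero]
  | succ k IH =>
    intro f g hf hg hvan
    have hinf : ((⊤:ℕ∞) : WithTop ℕ∞) + 1 ≤ ∞ := by norm_num
    have hf' : ContDiffOn ℝ ∞ (derivWithin f s) s := hf.derivWithin hs hinf
    have hg' : ContDiffOn ℝ ∞ (derivWithin g s) s := hg.derivWithin hs hinf
    have h1 : Set.EqOn (derivWithin (fun t => f t * g t) s)
        ((fun t => derivWithin f s t * g t) + fun t => f t * derivWithin g s t) s := by
      intro y hy
      exact derivWithin_fun_mul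
        (hf.differentiableOn (by norm_num) y hy) (hg.differentiableOn (by norm_num) y hy)
    have hkle : ((k+1 : ℕ) : WithTop ℕ∞) ≤ ∞ := by exact_mod_cast le_top
    have hvf' : ∀ m, m < k → iteratedDerivWithin m (derivWithin f s) s x₀ = 0 := by
      intro m hm
      have h2 := hvan (m+1) (Nat.succ_lt_succ hm)
      rwa [iteratedDerivWithin_succ'] at h2
    calc iteratedDerivWithin (k+2) (fun t => f t * g t) s x₀
        = iteratedDerivWithin (k+1) (derivWithin (fun t => f t * g t) s) s x₀ :=
          congrFun iteratedDerivWithin_succ' _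
      _ = iteratedDerivWithin (k+1)
            ((fun t => derivWithin f s t * g t) + fun t => f t * derivWithin g s t) s x₀ :=
          iteratedDerivWithin_congr h1 hx
      _ = iteratedDerivWithin (k+1) (fun t => derivWithin f s t * g t) s x₀
          + iteratedDerivWithin (k+1) (fun t => f t * derivWithin g s t) s x₀ :=
          iteratedDerivWithin_add hx hs (((hf'.mul hg).of_le hkle).contDiffWithinAt hx) (((hf.mul hg').of_le hkle).contDiffWithinAt hx)
      _ = (iteratedDerivWithin (k+1) (derivWithin f s) s x₀ * g x₀
            + ((k:ℂ)+1) * iteratedDerivWithin k (derivWithin f s) s x₀ * derivWithin g s x₀)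
          + iteratedDerivWithin (k+1) f s x₀ * derivWithin g s x₀ := by
          rw [IH (derivWithin f s) g hf' hg hvf',
            auxP1 hs hx (k+1) f (derivWithin g s) hf hg' hvan]
      _ = iteratedDerivWithin (k+2) f s x₀ * g x₀
          + ((k+1:ℕ)+1 : ℂ) * iteratedDerivWithin (k+1) f s x₀ * derivWithin g s x₀ := by
          rw [show iteratedDerivWithin (k+2) f s x₀
              = iteratedDerivWithin (k+1) (derivWithin f s) s x₀ from
                congrFun iteratedDerivWithin_succ' _,
            show iteratedDerivWithin (k+1) f s x₀
              = iteratedDerivWithin k (derivWithin f s) s x₀ from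
                congrFun iteratedDerivWithin_succ' _]
          push_cast
          ring
      _ = iteratedDerivWithin (k+1+1) f s x₀ * g x₀
          + (((k+1:ℕ):ℂ)+1) * iteratedDerivWithin (k+1) f s x₀ * derivWithin g s x₀ := by
          norm_num

private noncomputable def pdslice (u : Set (ℝ × ℝ)) (F : ℝ × ℝ → ℂ) : ℝ × ℝ → ℂ :=
  fun p => fderivWithin ℝ F u p (0, 1)

private lemma pdslice_contDiffOn {u : Set (ℝ × ℝ)} (hu : UniqueDiffOn ℝ u) {F : ℝ × ℝ → ℂ}
    (hF : ContDiffOn ℝ ∞ F u) : ContDiffOn ℝ ∞ (pdslice u F) u :=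
  (hF.fderivWithin hu (by norm_num)).clm_apply contDiffOn_const

private lemma sliceDeriv {s t : Set ℝ} (ht : UniqueDiffOn ℝ t) {F : ℝ × ℝ → ℂ}
    (hF : ContDiffOn ℝ ∞ F (s ×ˢ t)) {x e : ℝ} (hx : x ∈ s) (he : e ∈ t) :
    derivWithin (fun e' => F (x, e')) t e = pdslice (s ×ˢ t) F (x, e) := by
  have hdf : DifferentiableWithinAt ℝ F (s ×ˢ t) (x, e) :=
    hF.differentiableOn (by norm_num) _ (Set.mk_mem_prod hx he)
  have hι : HasDerivWithinAt (fun e' : ℝ => ((x : ℝ), e')) ((0 : ℝ), (1 : ℝ)) t e :=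
    (hasDerivWithinAt_const e t x).prodMk (hasDerivWithinAt_id e t)
  have hcomp := hdf.hasFDerivWithinAt.comp_hasDerivWithinAt e hι
    (fun e' he' => Set.mk_mem_prod hx he')
  exact hcomp.derivWithin (ht.uniqueDiffWithinAt he)

private lemma sliceIter {s t : Set ℝ} (ht : UniqueDiffOn ℝ t) (hu : UniqueDiffOn ℝ (s ×ˢ t)) :
    ∀ (n : ℕ) (F : ℝ × ℝ → ℂ), ContDiffOn ℝ ∞ F (s ×ˢ t) → ∀ x ∈ s, ∀ e ∈ t,
      iteratedDerivWithin n (fun e' => F (x, e')) t e = (pdslice (s ×ˢ t))^[n] F (x, e) := by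
  intro n
  induction n with
  | zero => intros; simp
  | succ n IH =>
    intro F hF x hx e he
    have h1 : Set.EqOn (derivWithin (fun e' => F (x, e')) t)
        (fun e' => pdslice (s ×ˢ t) F (x, e')) t :=
      fun e' he' => sliceDeriv ht hF hx he'
    calc iteratedDerivWithin (n+1) (fun e' => F (x, e')) t e
        = iteratedDerivWithin n (derivWithin (fun e' => F (x, e')) t) t e :=
          congrFun iteratedDerivWithin_succ' _
      _ = iteratedDerivWithin n (fun e' => pdslice (s ×ˢ t) F (x, e')) t e :=
          iteratedDerivWithin_congr h1 he
      _ = (pdslice (s ×ˢ t))^[n] (pdslice (s ×ˢ t) F) (x, e) :=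
          IH (pdslice (s ×ˢ t) F) (pdslice_contDiffOn hu hF) x hx e he
      _ = (pdslice (s ×ˢ t))^[n+1] F (x, e) := by
          rw [Function.iterate_succ_apply]

private lemma limitAB {a b : ℝ} (ha : a < 0) (hb : 0 < b) {Qf : ℝ → ℂ} {L A B : ℂ}
    (hcont : Filter.Tendsto Qf (nhdsWithin 0 (Ioo a b)) (nhds L))
    (hval : ∀ x ∈ Ioo (0:ℝ) b, Qf x = A * (x:ℂ)⁻¹ + B * ((x:ℂ)^2)⁻¹) :
    A = 0 ∧ B = 0 := by
  have hsub : Ioo (0:ℝ) b ⊆ Ioo a b := fun x hx => ⟨ha.trans hx.1, hx.2⟩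
  have hne : (𝓝[Ioo (0:ℝ) b] (0:ℝ)).NeBot := by
    rw [← mem_closure_iff_nhdsWithin_neBot, closure_Ioo hb.ne]
    exact ⟨le_refl 0, hb.le⟩
  have hQ : Tendsto Qf (𝓝[Ioo (0:ℝ) b] 0) (𝓝 L) :=
    hcont.mono_left (nhdsWithin_mono _ hsub)
  have hxc : Tendsto (fun x : ℝ => ((x:ℂ))) (𝓝[Ioo (0:ℝ) b] 0) (𝓝 0) := by
    have hc : Continuous fun x : ℝ => ((x:ℂ)) := Complex.continuous_ofReal
    simpa using (hc.tendsto 0).mono_left nhdsWithin_le_nhds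
  -- B = 0
  have hB : Tendsto (fun x : ℝ => ((x:ℂ))^2 * Qf x) (𝓝[Ioo (0:ℝ) b] 0) (𝓝 0) := by
    have := ((hxc.mul hxc).mul hQ)
    simpa [sq] using this
  have hB' : (fun x : ℝ => ((x:ℂ))^2 * Qf x) =ᶠ[𝓝[Ioo (0:ℝ) b] 0]
      (fun x : ℝ => A * (x:ℂ) + B) := by
    filter_upwards [self_mem_nhdsWithin] with x hx
    have hx0 : (x:ℂ) ≠ 0 := by exact_mod_cast (ne_of_gt hx.1)
    rw [hval x hx]
    field_simp
  have hB'' : Tendsto (fun x : ℝ => A * (x:ℂ) + B) (𝓝[Ioo (0:ℝ) b] 0) (𝓝 B) := by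
    have := (hxc.const_mul A).add_const B
    simpa using this
  have hBeq : B = 0 := (tendsto_nhds_unique (hB.congr' hB') hB'').symm
  -- A = 0
  have hA : Tendsto (fun x : ℝ => ((x:ℂ)) * Qf x) (𝓝[Ioo (0:ℝ) b] 0) (𝓝 0) := by
    simpa using hxc.mul hQ
  have hA' : (fun x : ℝ => ((x:ℂ)) * Qf x) =ᶠ[𝓝[Ioo (0:ℝ) b] 0] (fun _ : ℝ => A) := by
    filter_upwards [self_mem_nhdsWithin] with x hx
    have hx0 : (x:ℂ) ≠ 0 := by exact_mod_cast (ne_of_gt hx.1)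
    rw [hval x hx, hBeq]
    field_simp
    simp
  have hAeq : A = 0 := by
    have h1 := hA.congr' hA'
    exact tendsto_nhds_unique tendsto_const_nhds h1
  exact ⟨hAeq, hBeq⟩
private lemma computeQ {ε₀ : ℝ} (hε₀ : 0 < ε₀) {σI : ℂ} {x : ℝ} (hx0 : (x:ℂ) ≠ 0)
    {r₁ r₂ z₁ z₂ : ℝ → ℂ}
    (hr₁ : ContDiffOn ℝ ∞ r₁ (Ico 0 ε₀)) (hr₂ : ContDiffOn ℝ ∞ r₂ (Ico 0 ε₀))
    (hz₁ : ContDiffOn ℝ ∞ z₁ (Ico 0 ε₀)) (hz₂ : ContDiffOn ℝ ∞ z₂ (Ico 0 ε₀))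
    (hd₁ : ∀ e ∈ Ico (0:ℝ) ε₀, (x:ℂ) + σI*(e:ℂ)*z₁ e ≠ 0)
    (hd₂ : ∀ e ∈ Ico (0:ℝ) ε₀, (x:ℂ) + σI*(e:ℂ)*z₂ e ≠ 0)
    (k : ℕ)
    (hvan : ∀ m, m < k → iteratedDerivWithin m (fun e => r₁ e - r₂ e) (Ico 0 ε₀) 0 = 0 ∧
        iteratedDerivWithin m (fun e => z₁ e - z₂ e) (Ico 0 ε₀) 0 = 0) :
    iteratedDerivWithin (k+1)
        (fun e : ℝ => r₁ e * ((x:ℂ) + σI*(e:ℂ)*z₁ e)⁻¹ - r₂ e * ((x:ℂ) + σI*(e:ℂ)*z₂ e)⁻¹)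
        (Ico 0 ε₀) 0
      = iteratedDerivWithin (k+1) (fun e => r₁ e - r₂ e) (Ico 0 ε₀) 0 * (x:ℂ)⁻¹
        + (-σI * ((k:ℂ)+1) * (iteratedDerivWithin k (fun e => z₁ e - z₂ e) (Ico 0 ε₀) 0 * r₁ 0
            + iteratedDerivWithin k (fun e => r₁ e - r₂ e) (Ico 0 ε₀) 0 * z₂ 0)) * ((x:ℂ)^2)⁻¹ := by
  set t := Ico (0:ℝ) ε₀ with htdef
  have ht : UniqueDiffOn ℝ t := uniqueDiffOn_Ico 0 ε₀
  have h0t : (0:ℝ) ∈ t := ⟨le_refl 0, hε₀⟩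
  have hψ : ContDiffOn ℝ ∞ (fun e : ℝ => (e:ℂ)) t := Complex.ofRealCLM.contDiff.contDiffOn
  have hD₁ : ContDiffOn ℝ ∞ (fun e : ℝ => (x:ℂ) + σI*(e:ℂ)*z₁ e) t :=
    contDiffOn_const.add ((contDiffOn_const.mul hψ).mul hz₁)
  have hD₂ : ContDiffOn ℝ ∞ (fun e : ℝ => (x:ℂ) + σI*(e:ℂ)*z₂ e) t :=
    contDiffOn_const.add ((contDiffOn_const.mul hψ).mul hz₂)
  have hg₁ : ContDiffOn ℝ ∞ (fun e : ℝ => ((x:ℂ) + σI*(e:ℂ)*z₁ e)⁻¹) t := hD₁.inv hd₁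
  have hg₂ : ContDiffOn ℝ ∞ (fun e : ℝ => ((x:ℂ) + σI*(e:ℂ)*z₂ e)⁻¹) t := hD₂.inv hd₂
  have hδr : ContDiffOn ℝ ∞ (fun e => r₁ e - r₂ e) t := hr₁.sub hr₂
  have hδz : ContDiffOn ℝ ∞ (fun e => z₁ e - z₂ e) t := hz₁.sub hz₂
  have hφ : ContDiffOn ℝ ∞ (fun e : ℝ => (z₁ e - z₂ e) * (e:ℂ)) t := hδz.mul hψ
  have hG : ContDiffOn ℝ ∞
      (fun e : ℝ => r₁ e * (((x:ℂ) + σI*(e:ℂ)*z₁ e)⁻¹ * ((x:ℂ) + σI*(e:ℂ)*z₂ e)⁻¹)) t :=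
    hr₁.mul (hg₁.mul hg₂)
  have hkle : ((k+1 : ℕ) : WithTop ℕ∞) ≤ ∞ := by exact_mod_cast le_top
  -- derivative of the coercion
  have hψh : HasDerivWithinAt (fun e : ℝ => (e:ℂ)) 1 t 0 := by
    have h := (Complex.ofRealCLM.hasDerivAt (x := (0:ℝ))).hasDerivWithinAt (s := t)
    exact h
  have hψd : derivWithin (fun e : ℝ => (e:ℂ)) t 0 = 1 :=
    hψh.derivWithin (ht.uniqueDiffWithinAt h0t)
  -- derivative of g₂ at 0
  have hz₂dif : DifferentiableWithinAt ℝ z₂ t 0 := hz₂.differentiableOn (by norm_num) 0 h0t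
  have hder1 : HasDerivWithinAt (fun e : ℝ => σI*(e:ℂ)) σI t 0 := by
    have h := hψh.const_mul σI
    rw [mul_one] at h
    exact h
  have hder2 : HasDerivWithinAt (fun e : ℝ => (x:ℂ) + σI*(e:ℂ)*z₂ e) (σI * z₂ 0) t 0 := by
    have h := (hder1.mul hz₂dif.hasDerivWithinAt).const_add ((x:ℂ))
    simpa using h
  have hg₂d : derivWithin (fun e : ℝ => ((x:ℂ) + σI*(e:ℂ)*z₂ e)⁻¹) t 0
      = -(σI * z₂ 0) * ((x:ℂ)^2)⁻¹ := by
    have h3 := (hasDerivWithinAt_const (0:ℝ) t (1:ℂ)).fun_div hder2 (hd₂ 0 h0t)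
    simp only [one_div] at h3
    have h4 := h3.derivWithin (ht.uniqueDiffWithinAt h0t)
    rw [h4]
    have hd₂0 : ((x:ℂ) + σI*((0:ℝ):ℂ)*z₂ 0) = (x:ℂ) := by push_cast; ring
    rw [hd₂0, div_eq_mul_inv]
    ring
  -- vanishing of low derivatives of φ
  have hvφ : ∀ m, m < k+1 → iteratedDerivWithin m (fun e : ℝ => (z₁ e - z₂ e) * (e:ℂ)) t 0 = 0 := by
    intro m hm
    have h := auxP1 ht h0t m _ _ hδz hψ
      (fun j hj => (hvan j (hj.trans_le (Nat.lt_succ_iff.mp hm))).2)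
    rw [h]
    simp
  -- pointwise decomposition
  have hEq : Set.EqOn
      (fun e : ℝ => r₁ e * ((x:ℂ) + σI*(e:ℂ)*z₁ e)⁻¹ - r₂ e * ((x:ℂ) + σI*(e:ℂ)*z₂ e)⁻¹)
      ((fun e : ℝ => -σI * (((z₁ e - z₂ e) * (e:ℂ)) *
          (r₁ e * (((x:ℂ) + σI*(e:ℂ)*z₁ e)⁻¹ * ((x:ℂ) + σI*(e:ℂ)*z₂ e)⁻¹))))
        + fun e : ℝ => (r₁ e - r₂ e) * ((x:ℂ) + σI*(e:ℂ)*z₂ e)⁻¹) t := by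
    intro e he
    have h1 := hd₁ e he
    have h2 := hd₂ e he
    show r₁ e * ((x:ℂ) + σI*(e:ℂ)*z₁ e)⁻¹ - r₂ e * ((x:ℂ) + σI*(e:ℂ)*z₂ e)⁻¹
      = -σI * (((z₁ e - z₂ e) * (e:ℂ)) *
          (r₁ e * (((x:ℂ) + σI*(e:ℂ)*z₁ e)⁻¹ * ((x:ℂ) + σI*(e:ℂ)*z₂ e)⁻¹)))
        + (r₁ e - r₂ e) * ((x:ℂ) + σI*(e:ℂ)*z₂ e)⁻¹
    field_simp
    ring
  have e1 : iteratedDerivWithin (k+1)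
      (fun e : ℝ => r₁ e * ((x:ℂ) + σI*(e:ℂ)*z₁ e)⁻¹ - r₂ e * ((x:ℂ) + σI*(e:ℂ)*z₂ e)⁻¹) t 0
      = iteratedDerivWithin (k+1)
        ((fun e : ℝ => -σI * (((z₁ e - z₂ e) * (e:ℂ)) *
            (r₁ e * (((x:ℂ) + σI*(e:ℂ)*z₁ e)⁻¹ * ((x:ℂ) + σI*(e:ℂ)*z₂ e)⁻¹))))
          + fun e : ℝ => (r₁ e - r₂ e) * ((x:ℂ) + σI*(e:ℂ)*z₂ e)⁻¹) t 0 :=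
    iteratedDerivWithin_congr hEq h0t
  have e2 := iteratedDerivWithin_add h0t ht
    (((contDiffOn_const.mul (hφ.mul hG)).of_le hkle).contDiffWithinAt h0t) (((hδr.mul hg₂).of_le hkle).contDiffWithinAt h0t)
    (f := fun e : ℝ => -σI * (((z₁ e - z₂ e) * (e:ℂ)) *
        (r₁ e * (((x:ℂ) + σI*(e:ℂ)*z₁ e)⁻¹ * ((x:ℂ) + σI*(e:ℂ)*z₂ e)⁻¹))))
    (g := fun e : ℝ => (r₁ e - r₂ e) * ((x:ℂ) + σI*(e:ℂ)*z₂ e)⁻¹)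
  have e3 := iteratedDerivWithin_const_smul (F := ℂ) h0t ht (-σI) (((hφ.mul hG).of_le hkle).contDiffWithinAt h0t)
  have e4 := auxP1 ht h0t (k+1) _ _ hφ hG hvφ
  have e5 := auxP2 ht h0t k _ _ hδr hg₂ (fun j hj => (hvan j hj).1)
  have e6 := auxP2 ht h0t k _ _ hδz hψ (fun j hj => (hvan j hj).2)
  rw [e1, e2]
  rw [show (fun e : ℝ => -σI * (((z₁ e - z₂ e) * (e:ℂ)) *
      (r₁ e * (((x:ℂ) + σI*(e:ℂ)*z₁ e)⁻¹ * ((x:ℂ) + σI*(e:ℂ)*z₂ e)⁻¹))))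
    = (-σI) • (fun e : ℝ => ((z₁ e - z₂ e) * (e:ℂ)) *
      (r₁ e * (((x:ℂ) + σI*(e:ℂ)*z₁ e)⁻¹ * ((x:ℂ) + σI*(e:ℂ)*z₂ e)⁻¹))) from rfl]
  rw [e3, e4, e5, e6, hψd, hg₂d]
  simp only [Complex.ofReal_zero, mul_zero, zero_mul, add_zero, zero_add, mul_one, smul_eq_mul]
  field_simp
  ring

set_option maxHeartbeats 1000000 in
/-- If `rⱼ, zⱼ` are smooth on `[0,ε₀)` with `Re zⱼ > 0`, `rⱼ(0) ≠ 0`, and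
`r₁(ε)(x + σiεz₁(ε))⁻¹ − r₂(ε)(x + σiεz₂(ε))⁻¹` extends to a function smooth on
`J × [0,ε₀)` (`J = (a,b) ∋ 0`), then all ε-derivatives of `r₁ − r₂` and `z₁ − z₂`
vanish at `ε = 0`. -/
theorem stmt10 (a b ε₀ : ℝ) (ha : a < 0) (hb : 0 < b) (hε₀ : 0 < ε₀)
    (σ : ℝ) (hσ : σ = 1 ∨ σ = -1)
    (r₁ r₂ z₁ z₂ : ℝ → ℂ)
    (hr₁ : ContDiffOn ℝ (⊤ : ℕ∞) r₁ (Ico 0 ε₀)) (hr₂ : ContDiffOn ℝ (⊤ : ℕ∞) r₂ (Ico 0 ε₀))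
    (hz₁ : ContDiffOn ℝ (⊤ : ℕ∞) z₁ (Ico 0 ε₀)) (hz₂ : ContDiffOn ℝ (⊤ : ℕ∞) z₂ (Ico 0 ε₀))
    (hzre : ∀ ε ∈ Ico (0 : ℝ) ε₀, 0 < (z₁ ε).re ∧ 0 < (z₂ ε).re)
    (hr0 : r₁ 0 ≠ 0 ∧ r₂ 0 ≠ 0)
    (q : ℝ → ℝ → ℂ)
    (hq : ContDiffOn ℝ (⊤ : ℕ∞) (fun p : ℝ × ℝ => q p.1 p.2) (Ioo a b ×ˢ Ico 0 ε₀))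
    (heq : ∀ ε ∈ Ioo (0 : ℝ) ε₀, ∀ x ∈ Ioo a b,
      q x ε = r₁ ε * ((x : ℂ) + (σ : ℂ) * Complex.I * (ε : ℂ) * z₁ ε)⁻¹
            - r₂ ε * ((x : ℂ) + (σ : ℂ) * Complex.I * (ε : ℂ) * z₂ ε)⁻¹) :
    ∀ k : ℕ,
      iteratedDerivWithin k (fun ε => r₁ ε - r₂ ε) (Ico 0 ε₀) 0 = 0 ∧
      iteratedDerivWithin k (fun ε => z₁ ε - z₂ ε) (Ico 0 ε₀) 0 = 0 := by
  have ht : UniqueDiffOn ℝ (Ico (0:ℝ) ε₀) := uniqueDiffOn_Ico 0 ε₀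
  have hu : UniqueDiffOn ℝ (Ioo a b ×ˢ Ico (0:ℝ) ε₀) :=
    (uniqueDiffOn_Ioo a b).prod ht
  have h0t : (0:ℝ) ∈ Ico (0:ℝ) ε₀ := ⟨le_refl 0, hε₀⟩
  have h0s : (0:ℝ) ∈ Ioo a b := ⟨ha, hb⟩
  have hr₁' : ContDiffOn ℝ ∞ r₁ (Ico 0 ε₀) := hr₁.of_le (by simp)
  have hr₂' : ContDiffOn ℝ ∞ r₂ (Ico 0 ε₀) := hr₂.of_le (by simp)
  have hz₁' : ContDiffOn ℝ ∞ z₁ (Ico 0 ε₀) := hz₁.of_le (by simp)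
  have hz₂' : ContDiffOn ℝ ∞ z₂ (Ico 0 ε₀) := hz₂.of_le (by simp)
  have hq' : ContDiffOn ℝ ∞ (fun p : ℝ × ℝ => q p.1 p.2) (Ioo a b ×ˢ Ico 0 ε₀) :=
    hq.of_le (by simp)
  have hzre₁ : ∀ e ∈ Ico (0:ℝ) ε₀, 0 < (z₁ e).re := fun e he => (hzre e he).1
  have hzre₂ : ∀ e ∈ Ico (0:ℝ) ε₀, 0 < (z₂ e).re := fun e he => (hzre e he).2
  -- nonvanishing denominators
  have hdnz : ∀ (z : ℝ → ℂ), (∀ e ∈ Ico (0:ℝ) ε₀, 0 < (z e).re) → ∀ (x:ℝ), x ≠ 0 →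
      ∀ e ∈ Ico (0:ℝ) ε₀, (x:ℂ) + (σ:ℂ) * Complex.I * (e:ℂ) * z e ≠ 0 := by
    intro z hz x hx e he hcon
    rcases he.1.eq_or_lt with h0 | h0
    · rw [← h0] at hcon
      simp only [Complex.ofReal_zero, mul_zero, zero_mul, add_zero] at hcon
      exact hx (by exact_mod_cast hcon)
    · have him : ((x:ℂ) + (σ:ℂ) * Complex.I * (e:ℂ) * z e).im = σ * e * (z e).re := by
        simp [Complex.add_im, Complex.mul_im, Complex.mul_re]
      rw [hcon] at him
      simp only [Complex.zero_im] at him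
      have hre := hz e he
      rcases hσ with h | h <;> rw [h] at him <;> nlinarith
  -- smoothness of the explicit extension
  have hψ : ContDiffOn ℝ ∞ (fun e : ℝ => (e:ℂ)) (Ico 0 ε₀) :=
    Complex.ofRealCLM.contDiff.contDiffOn
  have hExSmooth : ∀ (x:ℝ), x ≠ 0 → ContDiffOn ℝ ∞
      (fun e : ℝ => r₁ e * ((x:ℂ) + (σ:ℂ) * Complex.I * (e:ℂ) * z₁ e)⁻¹
        - r₂ e * ((x:ℂ) + (σ:ℂ) * Complex.I * (e:ℂ) * z₂ e)⁻¹) (Ico 0 ε₀) := by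
    intro x hx
    exact (hr₁'.mul ((contDiffOn_const.add ((contDiffOn_const.mul hψ).mul hz₁')).inv
        (hdnz z₁ hzre₁ x hx))).sub
      (hr₂'.mul ((contDiffOn_const.add ((contDiffOn_const.mul hψ).mul hz₂')).inv
        (hdnz z₂ hzre₂ x hx)))
  -- the extension agrees with the slice of q on all of [0, ε₀)
  have hEx : ∀ x ∈ Ioo a b, x ≠ 0 → Set.EqOn (fun e => q x e)
      (fun e : ℝ => r₁ e * ((x:ℂ) + (σ:ℂ) * Complex.I * (e:ℂ) * z₁ e)⁻¹
        - r₂ e * ((x:ℂ) + (σ:ℂ) * Complex.I * (e:ℂ) * z₂ e)⁻¹) (Ico 0 ε₀) := by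
    intro x hxs hx0 e he
    rcases he.1.eq_or_lt with h0 | h0
    · have hqc : ContinuousWithinAt (fun e => q x e) (Ico 0 ε₀) 0 := by
        have c1 : ContinuousOn (fun e : ℝ => q x e) (Ico 0 ε₀) :=
          hq'.continuousOn.comp (Continuous.continuousOn (continuous_const.prodMk continuous_id))
            (fun e' he' => Set.mk_mem_prod hxs he')
        exact c1 0 h0t
      have hqE : ContinuousWithinAt
          (fun e : ℝ => r₁ e * ((x:ℂ) + (σ:ℂ) * Complex.I * (e:ℂ) * z₁ e)⁻¹
            - r₂ e * ((x:ℂ) + (σ:ℂ) * Complex.I * (e:ℂ) * z₂ e)⁻¹) (Ico 0 ε₀) 0 :=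
        (hExSmooth x hx0).continuousOn 0 h0t
      have hne : (𝓝[Ioo (0:ℝ) ε₀] (0:ℝ)).NeBot := by
        rw [← mem_closure_iff_nhdsWithin_neBot, closure_Ioo hε₀.ne]
        exact ⟨le_refl 0, hε₀.le⟩
      have hmono : 𝓝[Ioo (0:ℝ) ε₀] (0:ℝ) ≤ 𝓝[Ico (0:ℝ) ε₀] 0 :=
        nhdsWithin_mono _ Ioo_subset_Ico_self
      have l1 : Tendsto (fun e => q x e) (𝓝[Ioo (0:ℝ) ε₀] 0) (𝓝 (q x 0)) :=
        Filter.Tendsto.mono_left hqc hmono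
      have l2 : Tendsto
          (fun e : ℝ => r₁ e * ((x:ℂ) + (σ:ℂ) * Complex.I * (e:ℂ) * z₁ e)⁻¹
            - r₂ e * ((x:ℂ) + (σ:ℂ) * Complex.I * (e:ℂ) * z₂ e)⁻¹)
          (𝓝[Ioo (0:ℝ) ε₀] 0)
          (𝓝 (r₁ 0 * ((x:ℂ) + (σ:ℂ) * Complex.I * ((0:ℝ):ℂ) * z₁ 0)⁻¹
            - r₂ 0 * ((x:ℂ) + (σ:ℂ) * Complex.I * ((0:ℝ):ℂ) * z₂ 0)⁻¹)) :=
        Filter.Tendsto.mono_left hqE hmono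
      have l3 : Tendsto (fun e => q x e) (𝓝[Ioo (0:ℝ) ε₀] 0)
          (𝓝 (r₁ 0 * ((x:ℂ) + (σ:ℂ) * Complex.I * ((0:ℝ):ℂ) * z₁ 0)⁻¹
            - r₂ 0 * ((x:ℂ) + (σ:ℂ) * Complex.I * ((0:ℝ):ℂ) * z₂ 0)⁻¹)) := by
        apply l2.congr'
        filter_upwards [self_mem_nhdsWithin] with e' he'
        exact (heq e' he' x hxs).symm
      have hval := tendsto_nhds_unique l1 l3
      rw [← h0]
      exact hval
    · exact heq e ⟨h0, he.2⟩ x hxs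
  -- slice machinery
  have hiter : ∀ n : ℕ, ContDiffOn ℝ ∞
      ((pdslice (Ioo a b ×ˢ Ico 0 ε₀))^[n] (fun p : ℝ × ℝ => q p.1 p.2))
      (Ioo a b ×ˢ Ico 0 ε₀) := by
    intro n
    induction n with
    | zero => exact hq'
    | succ n IH =>
      rw [Function.iterate_succ_apply']
      exact pdslice_contDiffOn hu IH
  have hQval : ∀ (n : ℕ) (x : ℝ), x ∈ Ioo a b →
      (pdslice (Ioo a b ×ˢ Ico 0 ε₀))^[n] (fun p : ℝ × ℝ => q p.1 p.2) (x, 0)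
        = iteratedDerivWithin n (fun e => q x e) (Ico 0 ε₀) 0 :=
    fun n x hx => (sliceIter ht hu n _ hq' x hx 0 h0t).symm
  have hQcont : ∀ n : ℕ, Tendsto
      (fun x : ℝ => (pdslice (Ioo a b ×ˢ Ico 0 ε₀))^[n] (fun p : ℝ × ℝ => q p.1 p.2) (x, 0))
      (𝓝[Ioo a b] 0)
      (𝓝 ((pdslice (Ioo a b ×ˢ Ico 0 ε₀))^[n] (fun p : ℝ × ℝ => q p.1 p.2) (0, 0))) := by
    intro n
    have c1 : ContinuousOn
        (fun x' : ℝ => (pdslice (Ioo a b ×ˢ Ico 0 ε₀))^[n] (fun p : ℝ × ℝ => q p.1 p.2) (x', 0))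
        (Ioo a b) :=
      (hiter n).continuousOn.comp (Continuous.continuousOn (continuous_id.prodMk continuous_const))
        (fun x' hx' => Set.mk_mem_prod hx' h0t)
    exact c1 0 h0s
  -- main step
  have step : ∀ k : ℕ,
      (∀ m, m < k → iteratedDerivWithin m (fun e => r₁ e - r₂ e) (Ico 0 ε₀) 0 = 0 ∧
        iteratedDerivWithin m (fun e => z₁ e - z₂ e) (Ico 0 ε₀) 0 = 0) →
      iteratedDerivWithin (k+1) (fun e => r₁ e - r₂ e) (Ico 0 ε₀) 0 = 0 ∧
      iteratedDerivWithin k (fun e => z₁ e - z₂ e) (Ico 0 ε₀) 0 * r₁ 0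
        + iteratedDerivWithin k (fun e => r₁ e - r₂ e) (Ico 0 ε₀) 0 * z₂ 0 = 0 := by
    intro k hvank
    have hval : ∀ x ∈ Ioo (0:ℝ) b,
        (pdslice (Ioo a b ×ˢ Ico 0 ε₀))^[k+1] (fun p : ℝ × ℝ => q p.1 p.2) (x, 0)
          = iteratedDerivWithin (k+1) (fun e => r₁ e - r₂ e) (Ico 0 ε₀) 0 * (x:ℂ)⁻¹
            + (-((σ:ℂ) * Complex.I) * ((k:ℂ)+1) *
                (iteratedDerivWithin k (fun e => z₁ e - z₂ e) (Ico 0 ε₀) 0 * r₁ 0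
                  + iteratedDerivWithin k (fun e => r₁ e - r₂ e) (Ico 0 ε₀) 0 * z₂ 0))
              * ((x:ℂ)^2)⁻¹ := by
      intro x hx
      have hxs : x ∈ Ioo a b := ⟨lt_trans ha hx.1, hx.2⟩
      have hx0 : x ≠ 0 := ne_of_gt hx.1
      have hx0' : (x:ℂ) ≠ 0 := by exact_mod_cast hx0
      rw [hQval (k+1) x hxs, iteratedDerivWithin_congr (hEx x hxs hx0) h0t]
      exact computeQ hε₀ hx0' hr₁' hr₂' hz₁' hz₂'
        (hdnz z₁ hzre₁ x hx0) (hdnz z₂ hzre₂ x hx0) k hvank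
    obtain ⟨hA0, hB0⟩ := limitAB ha hb (hQcont (k+1)) hval
    refine ⟨hA0, ?_⟩
    have hfac : (-((σ:ℂ) * Complex.I) * ((k:ℂ)+1)) ≠ 0 := by
      apply mul_ne_zero
      · simp only [neg_ne_zero]
        exact mul_ne_zero (by rcases hσ with h | h <;> simp [h]) Complex.I_ne_zero
      · have : ((k:ℂ)+1) = ((k+1 : ℕ) : ℂ) := by push_cast; ring
        rw [this]
        exact_mod_cast Nat.succ_ne_zero k
    exact (mul_eq_zero.mp hB0).resolve_left hfac
  -- base case
  have base : iteratedDerivWithin 0 (fun e => r₁ e - r₂ e) (Ico 0 ε₀) 0 = 0 := by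
    have hval0 : ∀ x ∈ Ioo (0:ℝ) b,
        (pdslice (Ioo a b ×ˢ Ico 0 ε₀))^[0] (fun p : ℝ × ℝ => q p.1 p.2) (x, 0)
          = (r₁ 0 - r₂ 0) * (x:ℂ)⁻¹ + 0 * ((x:ℂ)^2)⁻¹ := by
      intro x hx
      have hxs : x ∈ Ioo a b := ⟨lt_trans ha hx.1, hx.2⟩
      have hx0 : x ≠ 0 := ne_of_gt hx.1
      have hx0' : (x:ℂ) ≠ 0 := by exact_mod_cast hx0
      rw [hQval 0 x hxs, iteratedDerivWithin_congr (hEx x hxs hx0) h0t,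
        iteratedDerivWithin_zero]
      simp only [Complex.ofReal_zero, mul_zero, zero_mul, add_zero, zero_add]
      ring
    obtain ⟨hA0, _⟩ := limitAB ha hb (hQcont 0) hval0
    rw [iteratedDerivWithin_zero]
    exact hA0
  -- strong induction
  have main : ∀ k : ℕ,
      iteratedDerivWithin k (fun e => r₁ e - r₂ e) (Ico 0 ε₀) 0 = 0 ∧
      iteratedDerivWithin k (fun e => z₁ e - z₂ e) (Ico 0 ε₀) 0 = 0 ∧
      iteratedDerivWithin (k+1) (fun e => r₁ e - r₂ e) (Ico 0 ε₀) 0 = 0 := by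
    intro k
    induction k using Nat.strong_induction_on with
    | _ k IH =>
      have hvank : ∀ m, m < k →
          iteratedDerivWithin m (fun e => r₁ e - r₂ e) (Ico 0 ε₀) 0 = 0 ∧
          iteratedDerivWithin m (fun e => z₁ e - z₂ e) (Ico 0 ε₀) 0 = 0 :=
        fun m hm => ⟨(IH m hm).1, (IH m hm).2.1⟩
      have hδrk : iteratedDerivWithin k (fun e => r₁ e - r₂ e) (Ico 0 ε₀) 0 = 0 := by
        cases k with
        | zero => exact base
        | succ k' => exact (IH k' (Nat.lt_succ_self k')).2.2
      obtain ⟨hA, hB⟩ := step k hvank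
      refine ⟨hδrk, ?_, hA⟩
      rw [hδrk, zero_mul, add_zero] at hB
      exact (mul_eq_zero.mp hB).resolve_right hr0.1
  intro k
  exact ⟨(main k).1, (main k).2.1⟩
end

section
/- Let V be holomorphic on the upper half-plane {Im z > 0}, continuous up to ℝ∖{0}, and satisfy V(az) = V(z) for some a ∈ (0,1) and all Im z > 0. Let γ₀ = [−1,−a] ∪ [a,1], γ_α the upper half-circle |z| = α oriented counterclockwise, and Γ the semi-annulus {a < |z| < 1, Im z > 0}. If the flux F := i∫_{γ₀} \overline{V(z)} ∂_z V(z) dz is ≥ 0, then V is constant on the upper half-plane. -/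
open Complex

/-- Let `V` be holomorphic on the upper half-plane, `C¹` up to `ℝ∖{0}`
(with boundary derivative `V'`), and satisfy `V(az) = V(z)` for some `a ∈ (0,1)`.
If the flux `F = i ∫_{γ₀} conj(V) ∂_z V dz ≥ 0` over `γ₀ = [−1,−a] ∪ [a,1]`, then `V`
is constant on the upper half-plane. -/
theorem stmt14 (a : ℝ) (ha : a ∈ Set.Ioo (0 : ℝ) 1) (V V' : ℂ → ℂ)
    (hV : ∀ z : ℂ, (0 < z.im ∨ (z.im = 0 ∧ z.re ≠ 0)) →
      HasDerivWithinAt V (V' z) {w : ℂ | 0 ≤ w.im} z)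
    (hV' : ContinuousOn V' {z : ℂ | 0 < z.im ∨ (z.im = 0 ∧ z.re ≠ 0)})
    (hinv : ∀ z : ℂ, 0 < z.im → V ((a : ℂ) * z) = V z)
    (F : ℂ)
    (hF : F = Complex.I *
        ((∫ x in (-1 : ℝ)..(-a), (starRingEnd ℂ) (V (x : ℂ)) * V' (x : ℂ)) +
          ∫ x in (a : ℝ)..1, (starRingEnd ℂ) (V (x : ℂ)) * V' (x : ℂ)))
    (hFre : 0 ≤ F.re) (hFim : F.im = 0) :
    ∀ z w : ℂ, 0 < z.im → 0 < w.im → V z = V w := by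
  obtain ⟨ha0, ha1⟩ := ha
  have hπ := Real.pi_pos
  set la := Real.log a with hla_def
  have hla : la < 0 := Real.log_neg ha0 ha1
  set sp : Set ℂ := {z : ℂ | 0 < z.im ∨ (z.im = 0 ∧ z.re ≠ 0)} with hsp_def
  set U : Set ℂ := {z : ℂ | 0 < z.im} with hU_def
  have hUopen : IsOpen U := isOpen_lt continuous_const Complex.continuous_im
  have hUsub : ∀ z ∈ U, {w : ℂ | 0 ≤ w.im} ∈ nhds z := fun z hz =>
    Filter.mem_of_superset (hUopen.mem_nhds hz) (fun w hw => show (0:ℝ) ≤ w.im from le_of_lt hw)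
  have hholo : ∀ z ∈ U, HasDerivAt V (V' z) z := fun z hz =>
    (hV z (Or.inl hz)).hasDerivAt (hUsub z hz)
  have hdiff : DifferentiableOn ℂ V U := fun z hz =>
    (hholo z hz).differentiableAt.differentiableWithinAt
  have hsple : sp ⊆ {w : ℂ | 0 ≤ w.im} := by
    rintro z (hz | ⟨hz, _⟩)
    · exact le_of_lt hz
    · exact le_of_eq hz.symm
  have hVcont : ContinuousOn V sp := fun z hz =>
    ((hV z hz).continuousWithinAt).mono hsple
  have hexp_mem : ∀ w : ℂ, 0 ≤ (exp w).im → exp w ∈ sp := by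
    intro w hw
    rcases eq_or_lt_of_le hw with h | h
    · refine Or.inr ⟨h.symm, fun hre => Complex.exp_ne_zero w ?_⟩
      exact Complex.ext (by simpa using hre) (by simpa using h.symm)
    · exact Or.inl h
  have hmulU : ∀ z ∈ U, (a : ℂ) * z ∈ U := by
    intro z hz
    have him : ((a : ℂ) * z).im = a * z.im := by
      simp [Complex.mul_im]
    have : (0 : ℝ) < a * z.im := mul_pos ha0 hz
    simpa [hU_def, him] using this
  have hV'inv : ∀ z ∈ U, V' ((a : ℂ) * z) * a = V' z := by
    intro z hz
    have h1 : HasDerivAt (fun w => V ((a : ℂ) * w)) (V' ((a : ℂ) * z) * a) z := by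
      have h := (hholo _ (hmulU z hz)).comp z ((hasDerivAt_id z).const_mul (a : ℂ))
      rw [mul_one] at h
      exact h
    have hEq : V =ᶠ[nhds z] fun w => V ((a : ℂ) * w) :=
      Filter.eventually_of_mem (hUopen.mem_nhds hz) (fun w hw => (hinv w hw).symm)
    exact (h1.congr_of_eventuallyEq hEq).unique (hholo z hz)
  -- holomorphic data on the preimage of U under exp
  set H : ℂ → ℂ := fun w => V (exp w) with hH_def
  set G : ℂ → ℂ := fun w => V' (exp w) * exp w with hG_def
  set G₂ : ℂ → ℂ := fun w => deriv G w with hG2_def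
  set P : Set ℂ := exp ⁻¹' U with hP_def
  have hPopen : IsOpen P := hUopen.preimage Complex.continuous_exp
  have hHderiv : ∀ w ∈ P, HasDerivAt H (G w) w := fun w hw =>
    HasDerivAt.comp w (hholo _ hw) (Complex.hasDerivAt_exp w)
  have hHdiff : DifferentiableOn ℂ H P := fun w hw =>
    (hHderiv w hw).differentiableAt.differentiableWithinAt
  have hHanal : AnalyticOnNhd ℂ H P := hHdiff.analyticOnNhd hPopen
  have hGeq : Set.EqOn G (deriv H) P := fun w hw => ((hHderiv w hw).deriv).symm
  have hGdiff : ∀ w ∈ P, HasDerivAt G (G₂ w) w := by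
    intro w hw
    have h1 : DifferentiableAt ℂ (deriv H) w := (hHanal.deriv w hw).differentiableAt
    have h2 : G =ᶠ[nhds w] deriv H :=
      Filter.eventuallyEq_of_mem (hPopen.mem_nhds hw) hGeq
    exact (h1.congr_of_eventuallyEq h2).hasDerivAt
  -- the rectangle
  set R : Set ℂ := (Set.uIcc la 0) ×ℂ (Set.uIcc 0 Real.pi) with hR_def
  have hRIcc : R = (Set.Icc la 0) ×ℂ (Set.Icc 0 Real.pi) := by
    rw [hR_def, Set.uIcc_of_le hla.le, Set.uIcc_of_le hπ.le]
  have hRmem : ∀ w ∈ R, 0 ≤ (exp w).im := by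
    intro w hw
    rw [hRIcc, Complex.mem_reProdIm] at hw
    rw [Complex.exp_im]
    exact mul_nonneg (Real.exp_pos _).le
      (Real.sin_nonneg_of_nonneg_of_le_pi hw.2.1 hw.2.2)
  have hGcont : ContinuousOn G R := by
    refine ContinuousOn.mul ?_ Complex.continuous_exp.continuousOn
    exact hV'.comp Complex.continuous_exp.continuousOn
      (fun w hw => hexp_mem w (hRmem w hw))
  have hHcont : ContinuousOn H R :=
    hVcont.comp Complex.continuous_exp.continuousOn (fun w hw => hexp_mem w (hRmem w hw))
  -- the integrand and its real derivative
  set q : ℂ → ℂ := fun w => (starRingEnd ℂ) (H w) * G w with hq_def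
  set q' : ℂ → ℂ →L[ℝ] ℂ := fun w =>
    ((Complex.normSq (G w) : ℂ)) • (Complex.conjCLE : ℂ →L[ℝ] ℂ)
      + ((starRingEnd ℂ) (H w) * G₂ w) • (ContinuousLinearMap.id ℝ ℂ) with hq'_def
  have hq'app : ∀ w h : ℂ, q' w h
      = (Complex.normSq (G w) : ℂ) * (starRingEnd ℂ) h
        + ((starRingEnd ℂ) (H w) * G₂ w) * h := by
    intro w h
    simp [hq'_def, Complex.conjCLE_apply, smul_eq_mul]
  have hcombo : ∀ w : ℂ, I • q' w 1 - q' w I = 2 * I * (Complex.normSq (G w) : ℂ) := by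
    intro w
    rw [hq'app, hq'app]
    simp [Complex.conj_I, smul_eq_mul]
    ring
  have Hc : ContinuousOn q R :=
    (Complex.continuous_conj.comp_continuousOn hHcont).mul hGcont
  have Hd : ∀ w ∈ (Set.Ioo la 0) ×ℂ (Set.Ioo 0 Real.pi), HasFDerivAt q (q' w) w := by
    intro w hw
    rw [Complex.mem_reProdIm] at hw
    have hwP : w ∈ P := by
      show 0 < (exp w).im
      rw [Complex.exp_im]
      exact mul_pos (Real.exp_pos _) (Real.sin_pos_of_pos_of_lt_pi hw.2.1 hw.2.2)
    have hH' : HasFDerivAt H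
        ((ContinuousLinearMap.smulRight (1 : ℂ →L[ℂ] ℂ) (G w)).restrictScalars ℝ) w :=
      ((hHderiv w hwP).hasFDerivAt).restrictScalars ℝ
    have hG' : HasFDerivAt G
        ((ContinuousLinearMap.smulRight (1 : ℂ →L[ℂ] ℂ) (G₂ w)).restrictScalars ℝ) w :=
      ((hGdiff w hwP).hasFDerivAt).restrictScalars ℝ
    have hconjH : HasFDerivAt (fun w => (starRingEnd ℂ) (H w))
        ((Complex.conjCLE : ℂ →L[ℝ] ℂ).comp
          ((ContinuousLinearMap.smulRight (1 : ℂ →L[ℂ] ℂ) (G w)).restrictScalars ℝ)) w :=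
      ((Complex.conjCLE : ℂ →L[ℝ] ℂ).hasFDerivAt).comp w hH'
    have hmul := hconjH.mul' hG'
    have hCLM : ((starRingEnd ℂ) (H w)) •
          ((ContinuousLinearMap.smulRight (1 : ℂ →L[ℂ] ℂ) (G₂ w)).restrictScalars ℝ)
        + ((Complex.conjCLE : ℂ →L[ℝ] ℂ).comp
            ((ContinuousLinearMap.smulRight (1 : ℂ →L[ℂ] ℂ) (G w)).restrictScalars ℝ)).smulRight
          (G w) = q' w := by
      apply ContinuousLinearMap.ext
      intro h
      rw [hq'app]
      simp [Complex.conjCLE_apply, smul_eq_mul, map_mul]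
      rw [show (starRingEnd ℂ) h * (starRingEnd ℂ) (G w) * G w
          = (G w * (starRingEnd ℂ) (G w)) * (starRingEnd ℂ) h by ring, Complex.mul_conj]
      ring
    rw [← hCLM]
    exact hmul
  have hRcomp : IsCompact R := by
    have hRim : R = (fun p : ℝ × ℝ => (p.1 : ℂ) + p.2 * I) ''
        (Set.Icc la 0 ×ˢ Set.Icc 0 Real.pi) := by
      rw [hRIcc]
      ext w
      constructor
      · intro hw
        rw [Complex.mem_reProdIm] at hw
        exact ⟨(w.re, w.im), ⟨hw.1, hw.2⟩, by simp [Complex.re_add_im]⟩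
      · rintro ⟨p, hp, rfl⟩
        rw [Complex.mem_reProdIm]
        constructor
        · simpa using hp.1
        · simpa using hp.2
    rw [hRim]
    exact (isCompact_Icc.prod isCompact_Icc).image
      (((Complex.continuous_ofReal.comp continuous_fst).add
        ((Complex.continuous_ofReal.comp continuous_snd).mul continuous_const)))
  have Hi : MeasureTheory.IntegrableOn (fun w => I • q' w 1 - q' w I) R := by
    have heq : (fun w => I • q' w 1 - q' w I)
        = fun w => 2 * I * (Complex.normSq (G w) : ℂ) := funext hcombo
    rw [heq]
    refine ContinuousOn.integrableOn_compact hRcomp ?_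
    exact continuousOn_const.mul
      ((Complex.continuous_ofReal.comp Complex.continuous_normSq).comp_continuousOn hGcont)
  have hre1 : ((la : ℂ)).re = la := by simp
  have him1 : ((la : ℂ)).im = 0 := by simp
  have hre2 : (((Real.pi : ℝ) : ℂ) * I).re = 0 := by simp
  have him2 : (((Real.pi : ℝ) : ℂ) * I).im = Real.pi := by simp
  have key := Complex.integral_boundary_rect_of_hasFDerivAt_real_off_countable q q'
    (la : ℂ) (((Real.pi : ℝ) : ℂ) * I) ∅ Set.countable_empty
    (by rw [hre1, him1, hre2, him2]; exact Hc)
    (by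
      rw [hre1, him1, hre2, him2, min_eq_left hla.le, max_eq_right hla.le,
        min_eq_left hπ.le, max_eq_right hπ.le, Set.diff_empty]
      exact Hd)
    (by rw [hre1, him1, hre2, him2]; exact Hi)
  rw [hre1, him1, hre2, him2] at key
  simp only [Complex.ofReal_zero, zero_mul, add_zero, zero_add] at key
  -- simplify the area integral
  set T : ℝ := ∫ x in la..(0:ℝ), ∫ y in (0:ℝ)..Real.pi,
      Complex.normSq (G (↑x + ↑y * I)) with hT_def
  have hRHS : (∫ x in la..(0:ℝ), ∫ y in (0:ℝ)..Real.pi,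
      (I • q' (↑x + ↑y * I) 1 - q' (↑x + ↑y * I) I)) = 2 * I * (T : ℂ) := by
    have h1 : ∀ x : ℝ, (∫ y in (0:ℝ)..Real.pi,
        (I • q' (↑x + ↑y * I) 1 - q' (↑x + ↑y * I) I))
        = 2 * I * ((∫ y in (0:ℝ)..Real.pi, Complex.normSq (G (↑x + ↑y * I)) : ℝ) : ℂ) := by
      intro x
      simp_rw [hcombo]
      rw [intervalIntegral.integral_const_mul, intervalIntegral.integral_ofReal]
    rw [intervalIntegral.integral_congr (g := fun x : ℝ =>
        2 * I * ((∫ y in (0:ℝ)..Real.pi, Complex.normSq (G (↑x + ↑y * I)) : ℝ) : ℂ))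
        (fun x _ => h1 x)]
    rw [intervalIntegral.integral_const_mul, intervalIntegral.integral_ofReal, hT_def]
  -- side edges agree by the invariance
  have hexp_la : exp ((la : ℝ) : ℂ) = (a : ℂ) := by
    rw [← Complex.ofReal_exp, Real.exp_log ha0]
  have hside : (∫ y in (0:ℝ)..Real.pi, q (↑y * I))
      = ∫ y in (0:ℝ)..Real.pi, q (↑la + ↑y * I) := by
    refine intervalIntegral.integral_congr_ae ?_
    have hne : ∀ᵐ y : ℝ, y ≠ Real.pi := by
      rw [MeasureTheory.ae_iff]
      simpa [not_not, Set.setOf_eq_eq_singleton] using MeasureTheory.measure_singleton (Real.pi)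
    filter_upwards [hne] with y hy hmem
    rw [Set.uIoc_of_le hπ.le] at hmem
    have hy0 : 0 < y := hmem.1
    have hyπ : y < Real.pi := lt_of_le_of_ne hmem.2 hy
    have hEU : exp (↑y * I) ∈ U := by
      show 0 < (exp (↑y * I)).im
      rw [Complex.exp_im]
      simpa using Real.sin_pos_of_pos_of_lt_pi hy0 hyπ
    have hsplit : exp (↑la + ↑y * I) = ↑a * exp (↑y * I) := by
      rw [Complex.exp_add, hexp_la]
    show (starRingEnd ℂ) (H (↑y * I)) * G (↑y * I)
        = (starRingEnd ℂ) (H (↑la + ↑y * I)) * G (↑la + ↑y * I)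
    simp only [hH_def, hG_def, hsplit]
    rw [hinv _ hEU,
      show V' (↑a * exp (↑y * I)) * (↑a * exp (↑y * I))
        = (V' (↑a * exp (↑y * I)) * ↑a) * exp (↑y * I) by ring,
      hV'inv _ hEU]
  -- bottom and top edges via change of variables
  set g : ℝ → ℂ := fun t => (starRingEnd ℂ) (V (t : ℂ)) * V' (t : ℂ) with hg_def
  have hgcont : ContinuousOn g {t : ℝ | t ≠ 0} := by
    have hmap : Set.MapsTo (fun t : ℝ => (t : ℂ)) {t : ℝ | t ≠ 0} sp := by
      intro t ht
      exact Or.inr ⟨by simp, by simpa using ht⟩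
    exact ((Complex.continuous_conj.comp_continuousOn
      (hVcont.comp Complex.continuous_ofReal.continuousOn hmap))).mul
      (hV'.comp Complex.continuous_ofReal.continuousOn hmap)
  have hbot : (∫ x in la..(0:ℝ), q ↑x) = ∫ t in a..(1:ℝ), g t := by
    have hsub := intervalIntegral.integral_comp_smul_deriv' (a := la) (b := (0:ℝ))
      (f := Real.exp) (f' := Real.exp) (g := g)
      (fun x _ => Real.hasDerivAt_exp x) Real.continuous_exp.continuousOn
      (hgcont.mono (by
        rintro t ⟨x, _, rfl⟩
        exact (Real.exp_pos x).ne'))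
    rw [Real.exp_log ha0, Real.exp_zero] at hsub
    rw [← hsub]
    refine intervalIntegral.integral_congr ?_
    intro x hx
    show q ↑x = Real.exp x • g (Real.exp x)
    simp only [hq_def, hg_def, hH_def, hG_def, ← Complex.ofReal_exp, Complex.real_smul]
    ring
  have htop : (∫ x in la..(0:ℝ), q (↑x + ↑Real.pi * I)) = ∫ t in (-a)..(-1:ℝ), g t := by
    have hsub := intervalIntegral.integral_comp_smul_deriv' (a := la) (b := (0:ℝ))
      (f := fun x => -Real.exp x) (f' := fun x => -Real.exp x) (g := g)
      (fun x _ => (Real.hasDerivAt_exp x).neg) Real.continuous_exp.neg.continuousOn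
      (hgcont.mono (by
        rintro t ⟨x, _, rfl⟩
        exact (neg_ne_zero.mpr (Real.exp_pos x).ne')))
    beta_reduce at hsub
    rw [Real.exp_log ha0, Real.exp_zero] at hsub
    rw [← hsub]
    refine intervalIntegral.integral_congr ?_
    intro x hx
    show q (↑x + ↑Real.pi * I) = (-Real.exp x) • g (-Real.exp x)
    simp only [hq_def, hg_def, hH_def, hG_def, Complex.exp_add, Complex.exp_pi_mul_I,
      ← Complex.ofReal_exp, Complex.real_smul, Complex.ofReal_neg]
    ring
  -- boundary sum
  have hS : (∫ t in (-1:ℝ)..(-a), g t) + (∫ t in a..(1:ℝ), g t) = 2 * I * (T : ℂ) := by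
    rw [hbot, htop, hside, hRHS] at key
    have h1 : (∫ t in (-a:ℝ)..(-1), g t) = -∫ t in (-1:ℝ)..(-a), g t :=
      intervalIntegral.integral_symm _ _
    rw [h1] at key
    simp only [smul_eq_mul] at key
    linear_combination key
  -- F = -2T, T = 0
  have hFT : F = I * (2 * I * (T : ℂ)) := by rw [hF, hS]
  have hFre' : F.re = -2 * T := by
    have hcalc : I * (2 * I * (T : ℂ)) = ((-2 * T : ℝ) : ℂ) := by
      push_cast
      ring_nf
      rw [Complex.I_sq]
      ring
    rw [hFT, hcalc, Complex.ofReal_re]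
  have hT0 : T = 0 := by
    have hTnn : 0 ≤ T := by
      rw [hT_def]
      refine intervalIntegral.integral_nonneg hla.le ?_
      intro x _
      exact intervalIntegral.integral_nonneg hπ.le (fun y _ => Complex.normSq_nonneg _)
    have h2 := hFre
    rw [hFre'] at h2
    linarith
  -- the continuous nonnegative density vanishes on the open rectangle
  set D : Set (ℝ × ℝ) := Set.Ioc la 0 ×ˢ Set.Ioc 0 Real.pi with hD_def
  set n2 : ℝ × ℝ → ℝ := fun p => Complex.normSq (G (↑p.1 + ↑p.2 * I)) with hn2_def
  have hmapK : ∀ p : ℝ × ℝ, p ∈ Set.Icc la 0 ×ˢ Set.Icc 0 Real.pi → (↑p.1 + ↑p.2 * I) ∈ R := by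
    intro p hp
    rw [hRIcc, Complex.mem_reProdIm]
    constructor
    · simpa using hp.1
    · simpa using hp.2
  have hn2cont : ContinuousOn n2 (Set.Icc la 0 ×ˢ Set.Icc 0 Real.pi) :=
    Complex.continuous_normSq.comp_continuousOn (hGcont.comp
      (((Complex.continuous_ofReal.comp continuous_fst).add
        ((Complex.continuous_ofReal.comp continuous_snd).mul continuous_const)).continuousOn)
      hmapK)
  have hIntD : MeasureTheory.IntegrableOn n2 D :=
    (hn2cont.integrableOn_compact (isCompact_Icc.prod isCompact_Icc)).mono_set
      (Set.prod_mono Set.Ioc_subset_Icc_self Set.Ioc_subset_Icc_self)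
  have hTD : T = ∫ p in D, n2 p := by
    rw [hD_def, MeasureTheory.Measure.volume_eq_prod, MeasureTheory.setIntegral_prod _ hIntD, hT_def,
      intervalIntegral.integral_of_le hla.le]
    refine MeasureTheory.setIntegral_congr_fun measurableSet_Ioc (fun x _ => ?_)
    rw [intervalIntegral.integral_of_le hπ.le]
  have hD0 : (∫ p in D, n2 p) = 0 := by rw [← hTD, hT0]
  have haezero : n2 =ᵐ[MeasureTheory.volume.restrict D] 0 := by
    have hnn : 0 ≤ᵐ[MeasureTheory.volume.restrict D] n2 :=
      Filter.Eventually.of_forall (fun p => Complex.normSq_nonneg _)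
    exact (MeasureTheory.integral_eq_zero_iff_of_nonneg_ae hnn hIntD).mp hD0
  have hZmeas : MeasureTheory.volume {p | p ∈ D ∧ n2 p ≠ 0} = 0 := by
    have h := (MeasureTheory.ae_restrict_iff'
      ((measurableSet_Ioc.prod measurableSet_Ioc : MeasurableSet D))).mp haezero
    rw [MeasureTheory.ae_iff] at h
    have hset : {p : ℝ × ℝ | p ∈ D ∧ n2 p ≠ 0}
        = {p : ℝ × ℝ | ¬(p ∈ D → n2 p = (0 : ℝ × ℝ → ℝ) p)} := by
      ext p
      simp [Classical.not_imp]
    rw [hset]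
    exact h
  have hO0 : ∀ p ∈ (Set.Ioo la 0 ×ˢ Set.Ioo 0 Real.pi), n2 p = 0 := by
    intro p hp
    by_contra hnp
    have hOopen : IsOpen ((Set.Ioo la 0 ×ˢ Set.Ioo 0 Real.pi) ∩ n2 ⁻¹' {(0:ℝ)}ᶜ) :=
      ContinuousOn.isOpen_inter_preimage
        (hn2cont.mono (Set.prod_mono Set.Ioo_subset_Icc_self Set.Ioo_subset_Icc_self))
        (isOpen_Ioo.prod isOpen_Ioo) isOpen_compl_singleton
    have hnonempty : ((Set.Ioo la 0 ×ˢ Set.Ioo 0 Real.pi) ∩ n2 ⁻¹' {(0:ℝ)}ᶜ).Nonempty :=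
      ⟨p, hp, hnp⟩
    have hpos := hOopen.measure_pos MeasureTheory.volume hnonempty
    have hsubZ : ((Set.Ioo la 0 ×ˢ Set.Ioo 0 Real.pi) ∩ n2 ⁻¹' {(0:ℝ)}ᶜ)
        ⊆ {p | p ∈ D ∧ n2 p ≠ 0} := by
      rintro r ⟨hr1, hr2⟩
      exact ⟨Set.prod_mono Set.Ioo_subset_Ioc_self Set.Ioo_subset_Ioc_self hr1, hr2⟩
    have hle := MeasureTheory.measure_mono (μ := MeasureTheory.volume) hsubZ
    rw [hZmeas] at hle
    exact absurd (le_antisymm hle zero_le) hpos.ne'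
  have hG0 : ∀ w : ℂ, w.re ∈ Set.Ioo la 0 → w.im ∈ Set.Ioo 0 Real.pi → V' (exp w) = 0 := by
    intro w h1 h2
    have h3 := hO0 (w.re, w.im) ⟨h1, h2⟩
    have hw : ((w.re : ℂ) + ↑w.im * I) = w := Complex.re_add_im w
    have hGw : G w = 0 := by
      refine Complex.normSq_eq_zero.mp ?_
      simpa [hn2_def, hw] using h3
    have hGw' : V' (exp w) * exp w = 0 := hGw
    exact (mul_eq_zero.mp hGw').resolve_right (Complex.exp_ne_zero w)
  -- identity theorem: deriv V vanishes on all of U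
  set d : ℂ → ℂ := deriv V with hd_def
  have hdanal : AnalyticOnNhd ℂ d U := (hdiff.analyticOnNhd hUopen).deriv
  have hdV' : ∀ z ∈ U, d z = V' z := fun z hz => (hholo z hz).deriv
  set w₁ : ℂ := ↑(la/2) + ↑(Real.pi/2) * I with hw1_def
  have hw1re : w₁.re = la/2 := by simp [hw1_def]
  have hw1im : w₁.im = Real.pi/2 := by simp [hw1_def]
  set z₁ : ℂ := exp w₁ with hz1_def
  have hz₁U : z₁ ∈ U := by
    show 0 < (exp w₁).im
    rw [Complex.exp_im, hw1re, hw1im, Real.sin_pi_div_two]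
    simpa using Real.exp_pos (la/2)
  set c : ℝ := -la/2 with hc_def
  have hc : 0 < c := by rw [hc_def]; linarith
  set t : ℕ → ℝ := fun k => c / (k+2) with ht_def
  have ht_pos : ∀ k, 0 < t k := fun k => div_pos hc (by positivity)
  have ht_lt : ∀ k, t k < c := fun k =>
    div_lt_self hc (by have : (0:ℝ) ≤ (k:ℝ) := Nat.cast_nonneg k; linarith)
  have ht0 : Filter.Tendsto t Filter.atTop (nhds 0) := by
    have h1 : Filter.Tendsto (fun k : ℕ => ((k:ℝ)+2)) Filter.atTop Filter.atTop :=
      Filter.tendsto_atTop_add_const_right _ 2 tendsto_natCast_atTop_atTop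
    have h2 := h1.inv_tendsto_atTop.const_mul c
    simpa [ht_def, div_eq_mul_inv] using h2
  set u : ℕ → ℂ := fun k => exp (w₁ + ↑(t k)) with hu_def
  have hwk_re : ∀ k, (w₁ + ↑(t k)).re ∈ Set.Ioo la 0 := by
    intro k
    rw [Complex.add_re, hw1re, Complex.ofReal_re]
    constructor
    · have := ht_pos k; linarith
    · have := ht_lt k; rw [hc_def] at this; linarith
  have hwk_im : ∀ k, (w₁ + ↑(t k)).im ∈ Set.Ioo 0 Real.pi := by
    intro k
    rw [Complex.add_im, hw1im, Complex.ofReal_im, add_zero]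
    constructor <;> linarith
  have huU : ∀ k, u k ∈ U := by
    intro k
    show 0 < (exp (w₁ + ↑(t k))).im
    rw [Complex.exp_im]
    exact mul_pos (Real.exp_pos _)
      (Real.sin_pos_of_pos_of_lt_pi (hwk_im k).1 (hwk_im k).2)
  have hu0 : ∀ k, d (u k) = 0 := by
    intro k
    rw [hdV' _ (huU k)]
    exact hG0 _ (hwk_re k) (hwk_im k)
  have hune : ∀ k, u k ≠ z₁ := by
    intro k h
    have h2 : exp w₁ * exp ((t k : ℂ)) = exp w₁ * 1 := by
      rw [mul_one, ← Complex.exp_add]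
      exact h
    have h3 : exp ((t k : ℂ)) = 1 := mul_left_cancel₀ (Complex.exp_ne_zero w₁) h2
    rw [← Complex.ofReal_exp] at h3
    have h4 : Real.exp (t k) = 1 := by exact_mod_cast h3
    have h5 : t k = 0 := Real.exp_injective (by rw [h4, Real.exp_zero])
    exact (ht_pos k).ne' h5
  have hulim : Filter.Tendsto u Filter.atTop (nhds z₁) := by
    have h1 : Filter.Tendsto (fun k => w₁ + ((t k : ℝ) : ℂ)) Filter.atTop (nhds (w₁ + 0)) :=
      tendsto_const_nhds.add ((Complex.continuous_ofReal.tendsto 0).comp ht0)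
    rw [add_zero] at h1
    exact (Complex.continuous_exp.tendsto w₁).comp h1
  have hfreq : ∃ᶠ z in nhdsWithin z₁ {z₁}ᶜ, d z = 0 := by
    have h2 : Filter.Tendsto u Filter.atTop (nhdsWithin z₁ {z₁}ᶜ) :=
      tendsto_nhdsWithin_of_tendsto_nhds_of_eventually_within u hulim
        (Filter.Eventually.of_forall fun k => hune k)
    exact h2.frequently (Filter.Frequently.of_forall hu0)
  have hconv : Convex ℝ U := convex_halfSpace_im_gt 0
  have hd0 : Set.EqOn d 0 U :=
    hdanal.eqOn_zero_of_preconnected_of_frequently_eq_zero hconv.isPreconnected hz₁U hfreq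
  -- conclusion
  intro z w hz hw
  refine hconv.is_const_of_fderivWithin_eq_zero hdiff ?_ hz hw
  intro x hx
  have hx0 : V' x = 0 := by
    rw [← hdV' x hx]
    exact hd0 hx
  have h0 : HasDerivAt V 0 x := hx0 ▸ hholo x hx
  have h1 : HasFDerivAt V ((1 : ℂ →L[ℂ] ℂ).smulRight (0:ℂ)) x := h0.hasFDerivAt
  have h2 : ((1 : ℂ →L[ℂ] ℂ).smulRight (0:ℂ)) = 0 := by
    ext1
    simp
  rw [h2] at h1
  exact (h1.hasFDerivWithinAt).fderivWithin (hUopen.uniqueDiffOn x hx)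
end

section
/- Consider the tilted unit square Ω_α with vertices (0,0), (cos α, sin α), √2(cos(α+π/4), sin(α+π/4)), (cos(α+π/2), sin(α+π/2)) for α ∈ (0, π/8), parametrized affinely on each side by θ ∈ ℝ/4ℤ with vertices at θ = 0,1,2,3. Let λ ∈ (cos(π/4+α), cos(π/4−α)), β = arctan(√(1−λ²)/λ), t₁ = tan(β−α), t₂ = tan(β+α). Then the chess billiard map b = γ⁺∘γ⁻ satisfies b²(θ) = (t₁/t₂)² θ + (t₁+t₂)(1−t₁)/t₂² for θ ∈ [0,1], and the unique fixed point of b² in [0,1] is θ₀ = (1−t₁)/(t₂−t₁) with ∂_θ b²(θ₀) = t₁²/t₂² < 1. -/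
/-- For the tilted square `Ω_α` (α ∈ (0,π/8)) with
`λ ∈ (cos(π/4+α), cos(π/4−α))`, `β = arctan(√(1−λ²)/λ)`, `t₁ = tan(β−α)`,
`t₂ = tan(β+α)`, the square of the chess billiard map on `[0,1]` is
`b²(θ) = (t₁/t₂)²θ + (t₁+t₂)(1−t₁)/t₂²`, with unique fixed point
`θ₀ = (1−t₁)/(t₂−t₁)` in `[0,1]` and `∂_θ b²(θ₀) = t₁²/t₂² < 1`. -/
theorem stmt16 (α lam : ℝ) (hα : α ∈ Set.Ioo (0 : ℝ) (Real.pi / 8))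
    (hlam : lam ∈ Set.Ioo (Real.cos (Real.pi / 4 + α)) (Real.cos (Real.pi / 4 - α))) :
    let β := Real.arctan (Real.sqrt (1 - lam ^ 2) / lam)
    let t₁ := Real.tan (β - α)
    let t₂ := Real.tan (β + α)
    let b2 : ℝ → ℝ := fun θ =>
      t₂⁻¹ * (4 - (t₁ * (3 - (t₂⁻¹ * (2 - (t₁ * (1 - θ) + 1)) + 2)) + 3))
    let θ₀ := (1 - t₁) / (t₂ - t₁)
    (∀ θ ∈ Set.Icc (0 : ℝ) 1,
        b2 θ = (t₁ / t₂) ^ 2 * θ + (t₁ + t₂) * (1 - t₁) / t₂ ^ 2) ∧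
    θ₀ ∈ Set.Icc (0 : ℝ) 1 ∧ b2 θ₀ = θ₀ ∧
    (∀ θ ∈ Set.Icc (0 : ℝ) 1, b2 θ = θ → θ = θ₀) ∧
    deriv b2 θ₀ = t₁ ^ 2 / t₂ ^ 2 ∧ t₁ ^ 2 / t₂ ^ 2 < 1 := by
  intro β t₁ t₂ b2 θ₀
  obtain ⟨hα0, hα8⟩ := hα
  obtain ⟨hl1, hl2⟩ := hlam
  have hpi : (0:ℝ) < Real.pi := Real.pi_pos
  -- positivity of lam
  have hang1 : Real.pi / 4 + α < Real.pi / 2 := by linarith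
  have hang0 : (0:ℝ) < Real.pi / 4 - α := by linarith
  have hlam0 : 0 < lam := lt_trans (Real.cos_pos_of_mem_Ioo ⟨by linarith, hang1⟩) hl1
  -- β = arccos lam
  have hβ : β = Real.arccos lam := (Real.arccos_eq_arctan hlam0).symm
  have hmem1 : Real.cos (Real.pi / 4 + α) ∈ Set.Icc (-1:ℝ) 1 :=
    ⟨Real.neg_one_le_cos _, Real.cos_le_one _⟩
  have hmem2 : Real.cos (Real.pi / 4 - α) ∈ Set.Icc (-1:ℝ) 1 :=
    ⟨Real.neg_one_le_cos _, Real.cos_le_one _⟩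
  have hlam1 : lam < 1 := lt_of_lt_of_le hl2 (Real.cos_le_one _)
  have hmeml : lam ∈ Set.Icc (-1:ℝ) 1 := ⟨by linarith [Real.neg_one_le_cos (Real.pi/4+α)], le_of_lt hlam1⟩
  have hβlt : β < Real.pi / 4 + α := by
    rw [hβ]
    calc Real.arccos lam < Real.arccos (Real.cos (Real.pi / 4 + α)) :=
          Real.strictAntiOn_arccos hmem1 hmeml hl1
      _ = Real.pi / 4 + α := Real.arccos_cos (by linarith) (by linarith)
  have hβgt : Real.pi / 4 - α < β := by
    rw [hβ]
    calc Real.pi / 4 - α = Real.arccos (Real.cos (Real.pi / 4 - α)) :=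
          (Real.arccos_cos (by linarith) (by linarith)).symm
      _ < Real.arccos lam := Real.strictAntiOn_arccos hmeml hmem2 hl2
  -- bounds on t₁ t₂
  have h1a : (0:ℝ) < β - α := by linarith
  have h1b : β - α < Real.pi / 4 := by linarith
  have h2a : Real.pi / 4 < β + α := by linarith
  have h2b : β + α < Real.pi / 2 := by linarith
  have htanpi4 : Real.tan (Real.pi / 4) = 1 := Real.tan_pi_div_four
  have ht1pos : 0 < t₁ := Real.tan_pos_of_pos_of_lt_pi_div_two h1a (by linarith)
  have ht1lt : t₁ < 1 := by
    have := Real.tan_lt_tan_of_nonneg_of_lt_pi_div_two (le_of_lt h1a)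
      (by linarith : Real.pi / 4 < Real.pi / 2) h1b
    rwa [htanpi4] at this
  have ht2gt : 1 < t₂ := by
    have := Real.tan_lt_tan_of_nonneg_of_lt_pi_div_two (by positivity) h2b h2a
    rwa [htanpi4] at this
  have ht2pos : (0:ℝ) < t₂ := by linarith
  have ht2ne : t₂ ≠ 0 := ne_of_gt ht2pos
  have hdne : t₂ - t₁ ≠ 0 := by intro h; linarith
  -- affine form
  have hform : ∀ θ : ℝ, b2 θ = (t₁ / t₂) ^ 2 * θ + (t₁ + t₂) * (1 - t₁) / t₂ ^ 2 := by
    intro θ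
    show t₂⁻¹ * (4 - (t₁ * (3 - (t₂⁻¹ * (2 - (t₁ * (1 - θ) + 1)) + 2)) + 3)) = _
    field_simp
    ring
  have hfix : b2 θ₀ = θ₀ := by
    rw [hform]
    show (t₁ / t₂) ^ 2 * ((1 - t₁) / (t₂ - t₁)) + (t₁ + t₂) * (1 - t₁) / t₂ ^ 2
        = (1 - t₁) / (t₂ - t₁)
    field_simp
    ring
  refine ⟨fun θ _ => hform θ, ⟨?_, ?_⟩, hfix, ?_, ?_, ?_⟩
  · exact div_nonneg (by linarith) (by linarith)
  · rw [div_le_one (by linarith)]; linarith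
  · intro θ _ hθ
    rw [hform] at hθ
    have hfix' := hfix
    rw [hform] at hfix'
    have hz : (θ - θ₀) * ((t₁ / t₂) ^ 2 - 1) = 0 := by
      have : (t₁ / t₂) ^ 2 * θ - (t₁ / t₂) ^ 2 * θ₀ = θ - θ₀ := by linarith
      linear_combination this
    rcases mul_eq_zero.1 hz with h | h
    · linarith [sub_eq_zero.1 h]
    · exfalso
      have hlt : (t₁ / t₂) ^ 2 < 1 := by
        have : t₁ / t₂ < 1 := (div_lt_one ht2pos).2 (by linarith)
        nlinarith [div_pos ht1pos ht2pos]
      linarith [sub_eq_zero.1 (by linarith : (t₁ / t₂) ^ 2 - 1 = 0)]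
  · have hD : HasDerivAt b2 ((t₁ / t₂) ^ 2) θ₀ := by
      have : HasDerivAt (fun θ : ℝ => (t₁ / t₂) ^ 2 * θ + (t₁ + t₂) * (1 - t₁) / t₂ ^ 2)
          ((t₁ / t₂) ^ 2) θ₀ := by
        simpa using ((hasDerivAt_id θ₀).const_mul ((t₁ / t₂) ^ 2)).add_const
          ((t₁ + t₂) * (1 - t₁) / t₂ ^ 2)
      exact this.congr_of_eventuallyEq (Filter.Eventually.of_forall fun x => (hform x))
    rw [hD.deriv, div_pow]
  · rw [div_lt_one (by positivity)]
    nlinarith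
end

section
/- Consider the trapezium 𝒯_d with vertices (0,0), (1+d,0), (1,1), (0,1), d > 0, parametrized affinely on each side by θ ∈ ℝ/4ℤ with the vertices at θ = 0,1,2,3 respectively. Let λ ∈ (0,1) with c = λ/√(1−λ²) satisfying max(1,d) < c < d+1. Then b²(θ) = ((c−d)/(c+d))·θ + 2c(c−1)/((1+d)(c+d)) for θ ∈ [0,1], with fixed point θ₀ = c(c−1)/(d(1+d)) ∈ [0,1] and derivative (c−d)/(c+d) ∈ (0,1). -/
/-- For the trapezium `𝒯_d` (`d > 0`) with `λ ∈ (0,1)`,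
`c = λ/√(1−λ²)` satisfying `max(1,d) < c < d+1`, the square of the chess billiard map
on `[0,1]` is `b²(θ) = ((c−d)/(c+d))θ + 2c(c−1)/((1+d)(c+d))`, with fixed point
`θ₀ = c(c−1)/(d(1+d)) ∈ [0,1]` and derivative `(c−d)/(c+d) ∈ (0,1)`. -/
theorem stmt17 (d lam c : ℝ) (hd : 0 < d) (hlam : lam ∈ Set.Ioo (0 : ℝ) 1)
    (hc : c = lam / Real.sqrt (1 - lam ^ 2))
    (hc1 : max 1 d < c) (hc2 : c < d + 1) :
    let b2 : ℝ → ℝ := fun θ =>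
      (c / (1 + d)) *
        (4 - ((1 / c) * (3 - (2 + (c - d) * (2 - ((1 + d) / (c + d) * (1 - θ) + 1)))) + 3))
    let θ₀ := c * (c - 1) / (d * (1 + d))
    (∀ θ ∈ Set.Icc (0 : ℝ) 1,
        b2 θ = ((c - d) / (c + d)) * θ + 2 * c * (c - 1) / ((1 + d) * (c + d))) ∧
    θ₀ ∈ Set.Icc (0 : ℝ) 1 ∧ b2 θ₀ = θ₀ ∧
    deriv b2 θ₀ = (c - d) / (c + d) ∧ (c - d) / (c + d) ∈ Set.Ioo (0 : ℝ) 1 := by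
  intro b2 θ₀
  have h1c : (1 : ℝ) < c := lt_of_le_of_lt (le_max_left 1 d) hc1
  have hdc : d < c := lt_of_le_of_lt (le_max_right 1 d) hc1
  have hc0 : (0 : ℝ) < c := by linarith
  have hcd : (0 : ℝ) < c + d := by linarith
  have h1d : (0 : ℝ) < 1 + d := by linarith
  have hb : b2 = fun θ => ((c - d) / (c + d)) * θ + 2 * c * (c - 1) / ((1 + d) * (c + d)) := by
    funext θ
    show (c / (1 + d)) * _ = _
    field_simp
    ring
  refine ⟨fun θ _ => by rw [hb], ⟨?_, ?_⟩, ?_, ?_, ?_, ?_⟩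
  · apply div_nonneg <;> nlinarith
  · rw [div_le_one (by positivity)]
    nlinarith
  · rw [hb]
    show (c - d) / (c + d) * (c * (c - 1) / (d * (1 + d))) +
        2 * c * (c - 1) / ((1 + d) * (c + d)) = c * (c - 1) / (d * (1 + d))
    have h2 : d * (1 + d) ≠ 0 := by positivity
    have h3 : (1 + d) * (c + d) ≠ 0 := by positivity
    rw [div_mul_div_comm, div_add_div _ _ (mul_ne_zero hcd.ne' h2) h3,
      div_eq_div_iff (mul_ne_zero (mul_ne_zero hcd.ne' h2) h3) h2]
    ring
  · rw [hb]
    have : HasDerivAt (fun θ => ((c - d) / (c + d)) * θ + 2 * c * (c - 1) / ((1 + d) * (c + d)))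
        ((c - d) / (c + d) * 1) θ₀ := ((hasDerivAt_id θ₀).const_mul _).add_const _
    simpa using this.deriv
  · exact div_pos (by linarith) hcd
  · rw [div_lt_one hcd]
    linarith
end

section
/- Let b be a C^∞ circle diffeomorphism with finite nonempty periodic set Σ = Σ⁺ ⊔ Σ⁻ of minimal period n and ∂b^n ≠ 1 on Σ. Then there exists a smooth Riemannian metric g on the circle (equivalently, a positively oriented coordinate θ) such that, computing derivatives in this coordinate, ∂_x b(x) < 1 for all x ∈ Σ⁺ and ∂_x b(x) > 1 for all x ∈ Σ⁻. -/
open Filter Topology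

lemma mono_deriv_nonneg' {f : ℝ → ℝ} (hm : Monotone f) {x : ℝ}
    (hd : DifferentiableAt ℝ f x) : 0 ≤ deriv f x := by
  have h := hd.hasDerivAt
  rw [hasDerivAt_iff_tendsto_slope] at h
  have h2 : Tendsto (slope f x) (𝓝[>] x) (𝓝 (deriv f x)) :=
    h.mono_left (nhdsWithin_mono x (fun y hy => hy.ne'))
  refine ge_of_tendsto h2 ?_
  filter_upwards [self_mem_nhdsWithin] with y hy
  rw [slope_def_field]
  exact div_nonneg (sub_nonneg.2 (hm hy.le)) (sub_nonneg.2 hy.le)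

/-- Let `b` be a `C^∞` circle diffeomorphism (lift `B`) with finite
nonempty periodic set of minimal period `n` and `∂(b^n) ≠ 1` on it. Then there is a
smooth Riemannian metric on the circle — a smooth positive `1`-periodic density `ρ` —
in which the derivative of `b` is `< 1` at attractive periodic points and `> 1` at
repulsive ones: `ρ(b(x))·b′(x) < ρ(x)` on `Σ⁺` and `ρ(b(x))·b′(x) > ρ(x)` on `Σ⁻`. -/
theorem stmt18 (B : ℝ → ℝ) (hB : ContDiff ℝ (⊤ : ℕ∞) B) (hmono : StrictMono B)
    (hlift : ∀ x, B (x + 1) = B x + 1)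
    (n : ℕ) (hn : 1 ≤ n)
    (hne : ∃ x : ℝ, ∃ m : ℤ, B^[n] x = x + m)
    (hfin : Set.Finite {x : ℝ | x ∈ Set.Ico (0 : ℝ) 1 ∧ ∃ m : ℤ, B^[n] x = x + m})
    (hmin : ∀ x : ℝ, (∃ m : ℤ, B^[n] x = x + m) →
      ∀ k : ℕ, 1 ≤ k → k < n → ¬∃ m : ℤ, B^[k] x = x + m)
    (hhyp : ∀ x : ℝ, (∃ m : ℤ, B^[n] x = x + m) → deriv (B^[n]) x ≠ 1) :
    ∃ ρ : ℝ → ℝ, ContDiff ℝ (⊤ : ℕ∞) ρ ∧ Function.Periodic ρ 1 ∧ (∀ x, 0 < ρ x) ∧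
      (∀ x : ℝ, (∃ m : ℤ, B^[n] x = x + m) → deriv (B^[n]) x < 1 →
        ρ (B x) * deriv B x < ρ x) ∧
      (∀ x : ℝ, (∃ m : ℤ, B^[n] x = x + m) → 1 < deriv (B^[n]) x →
        ρ x < ρ (B x) * deriv B x) := by
  -- smoothness of iterates
  have hBj : ∀ j : ℕ, ContDiff ℝ (⊤ : ℕ∞) (B^[j]) := by
    intro j
    induction j with
    | zero => simpa using contDiff_id
    | succ j ih => rw [Function.iterate_succ]; exact ih.comp hB
  have hBjd : ∀ j : ℕ, Differentiable ℝ (B^[j]) := fun j => (hBj j).differentiable (by simp)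
  -- iterates of the lift commute with translation by 1
  have hliftj : ∀ j : ℕ, ∀ x : ℝ, B^[j] (x + 1) = B^[j] x + 1 := by
    intro j
    induction j with
    | zero => simp
    | succ j ih =>
      intro x
      rw [Function.iterate_succ', Function.comp_apply, Function.comp_apply, ih, hlift]
  -- monotonicity of iterates
  have hmonoj : ∀ j : ℕ, Monotone (B^[j]) := fun j => (hmono.iterate j).monotone
  -- chain rule for iterates
  have hchain : ∀ j : ℕ, ∀ x : ℝ,
      deriv (B^[j + 1]) x = deriv (B^[j]) (B x) * deriv B x := by
    intro j x
    rw [Function.iterate_succ]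
    exact deriv_comp x ((hBjd j) (B x)) ((hB.differentiable (by simp)) x)
  -- the density
  set ρ : ℝ → ℝ := fun x => ∑ j ∈ Finset.range n, deriv (B^[j]) x with hρdef
  have hρcd : ContDiff ℝ (⊤ : ℕ∞) ρ := by
    apply ContDiff.sum
    intro j _
    have h := hBj j
    rw [show (((⊤ : ℕ∞) : WithTop ℕ∞)) = ((⊤ : ℕ∞) : WithTop ℕ∞) + 1 by rfl] at h
    exact (contDiff_succ_iff_deriv.mp h).2.2
  have hρper : Function.Periodic ρ 1 := by
    intro x
    apply Finset.sum_congr rfl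
    intro j _
    have h1 : (fun y : ℝ => B^[j] (y + 1)) = fun y => B^[j] y + 1 := by
      funext y; exact hliftj j y
    have h2 : deriv (fun y : ℝ => B^[j] (y + 1)) x = deriv (B^[j]) (x + 1) :=
      deriv_comp_add_const _ _ _
    rw [h1] at h2
    rw [← h2, deriv_add_const]
  have hρpos : ∀ x, 0 < ρ x := by
    intro x
    have h0 : (0 : ℕ) ∈ Finset.range n := Finset.mem_range.2 hn
    have hle := Finset.single_le_sum (f := fun j => deriv (B^[j]) x)
      (fun j _ => mono_deriv_nonneg' (hmonoj j) ((hBjd j) x)) h0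
    have hle' : (1 : ℝ) ≤ ρ x := by simpa using hle
    linarith
  -- the key identity: ρ(Bx)·B'(x) = ρ(x) + (deriv B^[n] x - 1)
  have hkey : ∀ x : ℝ, ρ (B x) * deriv B x = ρ x + (deriv (B^[n]) x - 1) := by
    intro x
    have h1 : ρ (B x) * deriv B x = ∑ j ∈ Finset.range n, deriv (B^[j + 1]) x := by
      rw [hρdef, Finset.sum_mul]
      exact Finset.sum_congr rfl fun j _ => (hchain j x).symm
    have h2 : ∑ j ∈ Finset.range (n + 1), deriv (B^[j]) x
        = (∑ j ∈ Finset.range n, deriv (B^[j + 1]) x) + deriv (B^[0]) x :=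
      Finset.sum_range_succ' _ n
    have h3 : ∑ j ∈ Finset.range (n + 1), deriv (B^[j]) x
        = (∑ j ∈ Finset.range n, deriv (B^[j]) x) + deriv (B^[n]) x :=
      Finset.sum_range_succ _ n
    have hzero : deriv (B^[0]) x = 1 := by simp
    rw [h1, hρdef]
    have := h2.symm.trans h3
    rw [hzero] at this
    linarith
  refine ⟨ρ, hρcd, hρper, hρpos, ?_, ?_⟩
  · intro x _ hlt
    have := hkey x
    linarith
  · intro x _ hgt
    have := hkey x
    linarith
end
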